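/- arXiv:0806.0701 — 16 statements merged into one kernel-verified Lean document; each statement's English description precedes it below -/
import Mathlib

section
/- Let α(n) = f(n)/g(n) and β(n) = g(n)/h(n). Then for every natural number n, α(n+1) = α(n)β(n)(6+α(n)) / (α(n) + 7β(n) + α(n)β(n)). -/
open Filter Real

theorem stmt_0 (f g h : ℕ → ℝ)
    (hf0 : f 0 = 4) (hg0 : g 0 = 1) (hh0 : h 0 = 1)
    (hf : ∀ n : ℕ, f (n + 1) = f n ^ 3 + 6 * f n ^ 2 * g n)
    (hg : ∀ n : ℕ, g (n + 1) = f n ^ 2 * g n + f n ^ 2 * h n + 7 * f n * g n ^ 2)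
    (hh : ∀ n : ℕ, h (n + 1) = 3 * f n * g n ^ 2 + 12 * f n * g n * h n + 14 * g n ^ 3)
    (hfpos : ∀ n : ℕ, 0 < f n) (hgpos : ∀ n : ℕ, 0 < g n) (hhpos : ∀ n : ℕ, 0 < h n)
    (α β : ℕ → ℝ)
    (hα : ∀ n : ℕ, α n = f n / g n) (hβ : ∀ n : ℕ, β n = g n / h n) :
    ∀ n : ℕ, α (n + 1) = α n * β n * (6 + α n) / (α n + 7 * β n + α n * β n) := by
  intro n
  have hfn := (hfpos n).ne'
  have hgn := (hgpos n).ne'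
  have hhn := (hhpos n).ne'
  have hgn1 := (hgpos (n + 1)).ne'
  have hfp := hfpos n; have hgp := hgpos n; have hhp := hhpos n
  have hden : α n + 7 * β n + α n * β n ≠ 0 := by
    have h1 : 0 < α n := by rw [hα]; positivity
    have h2 : 0 < β n := by rw [hβ]; positivity
    positivity
  rw [hα, hf n, hg n]
  rw [hα, hβ] at hden ⊢
  have hg1 : f n ^ 2 * g n + f n ^ 2 * h n + 7 * f n * g n ^ 2 ≠ 0 := by
    rw [← hg n]; exact hgn1
  have hD : f n * g n * h n ^ 3 + f n * g n ^ 2 * h n ^ 2 + g n ^ 3 * h n ^ 2 * 7 ≠ 0 := by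
    positivity
  field_simp [hD] at hden ⊢
  ring
end

section
/- Let α(n) = f(n)/g(n) and β(n) = g(n)/h(n). Then for every natural number n, β(n+1) = α(n)(α(n) + 7β(n) + α(n)β(n)) / (12α(n) + 14β(n) + 3α(n)β(n)). -/
open Filter Real

theorem stmt_1 (f g h : ℕ → ℝ)
    (hf0 : f 0 = 4) (hg0 : g 0 = 1) (hh0 : h 0 = 1)
    (hf : ∀ n : ℕ, f (n + 1) = f n ^ 3 + 6 * f n ^ 2 * g n)
    (hg : ∀ n : ℕ, g (n + 1) = f n ^ 2 * g n + f n ^ 2 * h n + 7 * f n * g n ^ 2)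
    (hh : ∀ n : ℕ, h (n + 1) = 3 * f n * g n ^ 2 + 12 * f n * g n * h n + 14 * g n ^ 3)
    (hfpos : ∀ n : ℕ, 0 < f n) (hgpos : ∀ n : ℕ, 0 < g n) (hhpos : ∀ n : ℕ, 0 < h n)
    (α β : ℕ → ℝ)
    (hα : ∀ n : ℕ, α n = f n / g n) (hβ : ∀ n : ℕ, β n = g n / h n) :
    ∀ n : ℕ, β (n + 1) = α n * (α n + 7 * β n + α n * β n) / (12 * α n + 14 * β n + 3 * α n * β n) := by
  intro n
  have hF := hfpos n
  have hG := hgpos n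
  have hH := hhpos n
  have hfn := hF.ne'
  have hgn := hG.ne'
  have hhn := hH.ne'
  have hh1 : (0:ℝ) < 3 * f n * g n ^ 2 + 12 * f n * g n * h n + 14 * g n ^ 3 := by positivity
  rw [hβ, hα, hβ, hg, hh]
  rw [div_eq_div_iff hh1.ne' (by positivity)]
  field_simp
  ring
end

section
/- Let α(n) = f(n)/g(n) and β(n) = g(n)/h(n). Then for every natural number n, 3β(n) ≤ α(n). -/
open Filter Real

theorem stmt_2 (f g h : ℕ → ℝ)
    (hf0 : f 0 = 4) (hg0 : g 0 = 1) (hh0 : h 0 = 1)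
    (hf : ∀ n : ℕ, f (n + 1) = f n ^ 3 + 6 * f n ^ 2 * g n)
    (hg : ∀ n : ℕ, g (n + 1) = f n ^ 2 * g n + f n ^ 2 * h n + 7 * f n * g n ^ 2)
    (hh : ∀ n : ℕ, h (n + 1) = 3 * f n * g n ^ 2 + 12 * f n * g n * h n + 14 * g n ^ 3)
    (hfpos : ∀ n : ℕ, 0 < f n) (hgpos : ∀ n : ℕ, 0 < g n) (hhpos : ∀ n : ℕ, 0 < h n)
    (α β : ℕ → ℝ)
    (hα : ∀ n : ℕ, α n = f n / g n) (hβ : ∀ n : ℕ, β n = g n / h n) :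
    ∀ n : ℕ, 3 * β n ≤ α n := by
  have key : ∀ n : ℕ, 3 * g n ^ 2 ≤ f n * h n ∧ f n * h n ≤ 7 * g n ^ 2 := by
    intro n
    induction n with
    | zero => rw [hf0, hg0, hh0]; norm_num
    | succ k ih =>
      obtain ⟨h1, h2⟩ := ih
      have hfk := hfpos k
      have hgk := hgpos k
      have hhk := hhpos k
      constructor
      · have hD : f (k+1) * h (k+1) - 3 * g (k+1) ^ 2 =
            f k ^ 2 * (2 * f k * g k * (3 * (f k * h k) - 5 * g k ^ 2)
              - 3 * (f k * h k - 3 * g k ^ 2) * (f k * h k - 7 * g k ^ 2)) := by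
          rw [hf k, hg k, hh k]; ring
        have t1 : 0 ≤ 2 * f k * g k * (3 * (f k * h k) - 5 * g k ^ 2) := by
          have : (0:ℝ) ≤ 3 * (f k * h k) - 5 * g k ^ 2 := by nlinarith [sq_nonneg (g k)]
          have hp : (0:ℝ) ≤ 2 * f k * g k := by positivity
          exact mul_nonneg hp this
        have t2 : 0 ≤ 3 * (f k * h k - 3 * g k ^ 2) * (7 * g k ^ 2 - f k * h k) := by
          have a1 : (0:ℝ) ≤ f k * h k - 3 * g k ^ 2 := by linarith
          have a2 : (0:ℝ) ≤ 7 * g k ^ 2 - f k * h k := by linarith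
          nlinarith [mul_nonneg a1 a2]
        have inner : 0 ≤ 2 * f k * g k * (3 * (f k * h k) - 5 * g k ^ 2)
            - 3 * (f k * h k - 3 * g k ^ 2) * (f k * h k - 7 * g k ^ 2) := by nlinarith
        nlinarith [mul_nonneg (sq_nonneg (f k)) inner]
      · have hD : 7 * g (k+1) ^ 2 - f (k+1) * h (k+1) =
            f k ^ 2 * (4 * f k ^ 2 * g k ^ 2 + 7 * f k ^ 2 * h k ^ 2
              + 2 * f k ^ 2 * g k * h k + 66 * f k * g k ^ 3
              + 26 * f k * g k ^ 2 * h k + 259 * g k ^ 4) := by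
          rw [hf k, hg k, hh k]; ring
        nlinarith [sq_nonneg (f k), mul_pos hfk hgk, mul_pos hfk hhk,
          mul_pos (mul_pos hfk hgk) hgk, mul_pos (mul_pos hfk hgk) hhk,
          mul_pos (mul_pos hfk hfk) (mul_pos hgk hhk),
          mul_pos (mul_pos hfk hfk) (mul_pos hgk hgk),
          mul_pos (mul_pos hfk hfk) (mul_pos hhk hhk),
          mul_pos (mul_pos (mul_pos hfk hgk) hgk) hgk,
          mul_pos (mul_pos (mul_pos hfk hgk) hgk) hhk,
          mul_pos (mul_pos (mul_pos hgk hgk) hgk) hgk]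
  intro n
  rw [hα, hβ]
  rw [show (3 : ℝ) * (g n / h n) = (3 * g n) / h n by ring,
    div_le_div_iff₀ (hhpos n) (hgpos n)]
  have := (key n).1
  nlinarith [this]
end

section
/- Let α(n) = f(n)/g(n) and β(n) = g(n)/h(n). Then for every natural number n, α(n) ≤ 4β(n). -/
open Filter Real

theorem stmt_3 (f g h : ℕ → ℝ)
    (hf0 : f 0 = 4) (hg0 : g 0 = 1) (hh0 : h 0 = 1)
    (hf : ∀ n : ℕ, f (n + 1) = f n ^ 3 + 6 * f n ^ 2 * g n)
    (hg : ∀ n : ℕ, g (n + 1) = f n ^ 2 * g n + f n ^ 2 * h n + 7 * f n * g n ^ 2)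
    (hh : ∀ n : ℕ, h (n + 1) = 3 * f n * g n ^ 2 + 12 * f n * g n * h n + 14 * g n ^ 3)
    (hfpos : ∀ n : ℕ, 0 < f n) (hgpos : ∀ n : ℕ, 0 < g n) (hhpos : ∀ n : ℕ, 0 < h n)
    (α β : ℕ → ℝ)
    (hα : ∀ n : ℕ, α n = f n / g n) (hβ : ∀ n : ℕ, β n = g n / h n) :
    ∀ n : ℕ, α n ≤ 4 * β n := by
  have key : ∀ n : ℕ, f n * h n ≤ 4 * g n ^ 2 := by
    intro n
    induction n with
    | zero => rw [hf0, hg0, hh0]; norm_num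
    | succ k ih =>
      have hF := hfpos k
      have hG := hgpos k
      have hH := hhpos k
      rw [hf k, hg k, hh k]
      have hE : 0 ≤ 4 * g k ^ 2 - f k * h k := by linarith
      have inner : 0 ≤ 112 * g k ^ 4 + 24 * f k * g k ^ 3 + f k ^ 2 * g k ^ 2
          - 16 * f k * g k ^ 2 * h k - 4 * f k ^ 2 * g k * h k + 4 * f k ^ 2 * h k ^ 2 := by
        nlinarith [sq_nonneg (f k - 2 * g k), sq_nonneg (f k * h k - 4 * g k ^ 2),
        mul_pos hF hG, mul_pos hF hH, mul_pos hG hH, sq_nonneg (f k * g k - f k * h k),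
        mul_pos (mul_pos hF hG) hH, sq_nonneg (f k + g k),
        mul_nonneg (mul_nonneg hF.le hG.le) (sub_nonneg.2 ih),
        mul_nonneg (mul_nonneg hF.le hF.le) (sub_nonneg.2 ih),
        mul_nonneg (mul_nonneg hG.le hG.le) (sub_nonneg.2 ih),
        mul_nonneg (mul_nonneg hG.le hH.le) (sub_nonneg.2 ih),
        sq_nonneg (f k * h k - 2 * g k ^ 2),
        mul_nonneg (mul_nonneg hF.le hG.le) hE]
      nlinarith [mul_nonneg (sq_nonneg (f k)) inner, mul_pos hF hG, mul_pos hF hH]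
  intro n
  rw [hα n, hβ n]
  rw [div_le_iff₀ (hgpos n)]
  have hh' := hhpos n
  have : 4 * (g n / h n) * g n = 4 * g n ^ 2 / h n := by ring
  rw [this, le_div_iff₀ hh']
  nlinarith [key n, hgpos n]
end

section
/- Let α(n) = f(n)/g(n). Then the sequence α is strictly decreasing: for every natural number n, α(n+1) < α(n). -/
open Filter Real

theorem stmt_4 (f g h : ℕ → ℝ)
    (hf0 : f 0 = 4) (hg0 : g 0 = 1) (hh0 : h 0 = 1)
    (hf : ∀ n : ℕ, f (n + 1) = f n ^ 3 + 6 * f n ^ 2 * g n)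
    (hg : ∀ n : ℕ, g (n + 1) = f n ^ 2 * g n + f n ^ 2 * h n + 7 * f n * g n ^ 2)
    (hh : ∀ n : ℕ, h (n + 1) = 3 * f n * g n ^ 2 + 12 * f n * g n * h n + 14 * g n ^ 3)
    (hfpos : ∀ n : ℕ, 0 < f n) (hgpos : ∀ n : ℕ, 0 < g n) (hhpos : ∀ n : ℕ, 0 < h n)
    (α β : ℕ → ℝ)
    (hα : ∀ n : ℕ, α n = f n / g n) (hβ : ∀ n : ℕ, β n = g n / h n) :
    ∀ n : ℕ, α (n + 1) < α n := by
  intro n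
  rw [hα, hα, div_lt_div_iff₀ (hgpos _) (hgpos _), hf, hg]
  nlinarith [hfpos n, hgpos n, hhpos n, mul_pos (mul_pos (hfpos n) (hfpos n)) (hgpos n),
    mul_pos (mul_pos (mul_pos (hfpos n) (hfpos n)) (hfpos n)) (hhpos n),
    mul_pos (mul_pos (mul_pos (hfpos n) (hfpos n)) (hgpos n)) (hgpos n)]
end

section
/- Let β(n) = g(n)/h(n). Then the sequence β is strictly decreasing: for every natural number n, β(n+1) < β(n). -/
open Filter Real

theorem stmt_5 (f g h : ℕ → ℝ)
    (hf0 : f 0 = 4) (hg0 : g 0 = 1) (hh0 : h 0 = 1)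
    (hf : ∀ n : ℕ, f (n + 1) = f n ^ 3 + 6 * f n ^ 2 * g n)
    (hg : ∀ n : ℕ, g (n + 1) = f n ^ 2 * g n + f n ^ 2 * h n + 7 * f n * g n ^ 2)
    (hh : ∀ n : ℕ, h (n + 1) = 3 * f n * g n ^ 2 + 12 * f n * g n * h n + 14 * g n ^ 3)
    (hfpos : ∀ n : ℕ, 0 < f n) (hgpos : ∀ n : ℕ, 0 < g n) (hhpos : ∀ n : ℕ, 0 < h n)
    (α β : ℕ → ℝ)
    (hα : ∀ n : ℕ, α n = f n / g n) (hβ : ∀ n : ℕ, β n = g n / h n) :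
    ∀ n : ℕ, β (n + 1) < β n := by
  have inv : ∀ n : ℕ, f n ≤ 4 * g n ∧ 3 * g n ^ 2 ≤ f n * h n ∧ f n * h n ≤ 4 * g n ^ 2 := by
    intro n
    induction n with
    | zero => rw [hf0, hg0, hh0]; norm_num
    | succ n ih =>
      obtain ⟨h1, h2, h3⟩ := ih
      have pf := hfpos n
      have pg := hgpos n
      have ph := hhpos n
      have key2 : g n * (f n + 6 * g n) * (3 * (f n * g n) + 12 * (f n * h n) + 14 * g n ^ 2)
          ≤ 4 * (f n * g n + f n * h n + 7 * g n ^ 2) ^ 2 := by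
        nlinarith [sq_nonneg (f n * g n - 2 * (f n * h n)),
          mul_nonneg (sq_nonneg (g n)) (sub_nonneg.2 h3),
          mul_pos pf (mul_pos pg (mul_pos pg pg))]
      have key3 : 3 * (f n * g n + f n * h n + 7 * g n ^ 2) ^ 2
          ≤ g n * (f n + 6 * g n) * (3 * (f n * g n) + 12 * (f n * h n) + 14 * g n ^ 2) := by
        nlinarith [mul_nonneg (mul_nonneg pf.le pg.le)
            (by nlinarith : (0:ℝ) ≤ 6 * (f n * h n) - 10 * g n ^ 2),
          mul_nonneg (by linarith : (0:ℝ) ≤ f n * h n - 3 * g n ^ 2)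
            (by linarith : (0:ℝ) ≤ 7 * g n ^ 2 - f n * h n)]
      refine ⟨?_, ?_, ?_⟩
      · rw [hf n, hg n]
        nlinarith [mul_nonneg (mul_nonneg (sub_nonneg.2 h1) pf.le)
            (by positivity : (0:ℝ) ≤ f n + 6 * g n),
          mul_nonneg pf.le (sub_nonneg.2 h2),
          mul_pos pf (mul_pos pg pg)]
      · rw [hf n, hg n, hh n]
        nlinarith [mul_le_mul_of_nonneg_left key3 (sq_nonneg (f n))]
      · rw [hf n, hg n, hh n]
        nlinarith [mul_le_mul_of_nonneg_left key2 (sq_nonneg (f n))]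
  intro n
  obtain ⟨h1, h2, h3⟩ := inv n
  have pf := hfpos n
  have pg := hgpos n
  have ph := hhpos n
  rw [hβ (n + 1), hβ n, div_lt_div_iff₀ (hhpos (n + 1)) (hhpos n)]
  rw [hg n, hh n]
  nlinarith [mul_nonneg (mul_nonneg pf.le pg.le) (sub_nonneg.2 h3),
    mul_nonneg (sub_nonneg.2 h3) (by positivity : (0:ℝ) ≤ 4 * g n ^ 2 + f n * h n),
    mul_nonneg (by positivity : (0:ℝ) ≤ 5 * g n ^ 2) (sub_nonneg.2 h2),
    mul_pos (mul_pos pg (mul_pos pg pg)) (by linarith : (0:ℝ) < 13 * g n - f n)]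
end

section
/- Let α(n) = f(n)/g(n) and β(n) = g(n)/h(n). Then α(n) tends to 0 as n tends to infinity, and β(n) tends to 0 as n tends to infinity. -/
open Filter Real

theorem stmt_6 (f g h : ℕ → ℝ)
    (hf0 : f 0 = 4) (hg0 : g 0 = 1) (hh0 : h 0 = 1)
    (hf : ∀ n : ℕ, f (n + 1) = f n ^ 3 + 6 * f n ^ 2 * g n)
    (hg : ∀ n : ℕ, g (n + 1) = f n ^ 2 * g n + f n ^ 2 * h n + 7 * f n * g n ^ 2)
    (hh : ∀ n : ℕ, h (n + 1) = 3 * f n * g n ^ 2 + 12 * f n * g n * h n + 14 * g n ^ 3)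
    (hfpos : ∀ n : ℕ, 0 < f n) (hgpos : ∀ n : ℕ, 0 < g n) (hhpos : ∀ n : ℕ, 0 < h n)
    (α β : ℕ → ℝ)
    (hα : ∀ n : ℕ, α n = f n / g n) (hβ : ∀ n : ℕ, β n = g n / h n) :
    Tendsto α atTop (nhds 0) ∧ Tendsto β atTop (nhds 0) := by
  have hαpos : ∀ n, 0 < α n := fun n => (hα n) ▸ div_pos (hfpos n) (hgpos n)
  have hβpos : ∀ n, 0 < β n := fun n => (hβ n) ▸ div_pos (hgpos n) (hhpos n)
  -- step lemma
  have step : ∀ n, f n ≤ 4 * g n → α (n + 1) ≤ 10 / 11 * α n := by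
    intro n hle
    rw [hα (n + 1), hα n, div_le_iff₀ (hgpos (n + 1)), mul_comm (10 / 11 : ℝ),
      div_mul_eq_mul_div, div_mul_eq_mul_div, le_div_iff₀ (hgpos n)]
    have hfn := hfpos n
    have hgn := hgpos n
    have hhn := (hhpos n).le
    rw [hf n, hg n]
    nlinarith [mul_nonneg (mul_nonneg (sq_nonneg (f n)) hgn.le) (sub_nonneg.2 hle),
      mul_nonneg (mul_nonneg (mul_nonneg hfn.le hfn.le) hfn.le) hhn]
  -- bound α n ≤ 4 * (10/11)^n
  have hbound : ∀ n, α n ≤ 4 * (10 / 11 : ℝ) ^ n := by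
    intro n
    induction n with
    | zero => simp [hα 0, hf0, hg0]
    | succ k ih =>
      have hk4 : α k ≤ 4 := by
        have : (10 / 11 : ℝ) ^ k ≤ 1 := pow_le_one₀ (by norm_num) (by norm_num)
        nlinarith
      have hle : f k ≤ 4 * g k := by
        have := hα k
        have hg' := hgpos k
        rw [hα k, div_le_iff₀ hg'] at hk4
        linarith
      calc α (k + 1) ≤ 10 / 11 * α k := step k hle
        _ ≤ 10 / 11 * (4 * (10 / 11 : ℝ) ^ k) := by nlinarith
        _ = 4 * (10 / 11 : ℝ) ^ (k + 1) := by ring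
  have hαtend : Tendsto α atTop (nhds 0) := by
    have hgeo : Tendsto (fun n => 4 * (10 / 11 : ℝ) ^ n) atTop (nhds 0) := by
      have := tendsto_pow_atTop_nhds_zero_of_lt_one (by norm_num : (0:ℝ) ≤ 10 / 11)
        (by norm_num : (10 / 11 : ℝ) < 1)
      simpa using this.const_mul 4
    exact squeeze_zero (fun n => (hαpos n).le) hbound hgeo
  refine ⟨hαtend, ?_⟩
  -- β (n+1) ≤ α n
  have hβα : ∀ n, β (n + 1) ≤ α n := by
    intro n
    rw [hβ (n + 1), hα n, div_le_div_iff₀ (hhpos (n + 1)) (hgpos n)]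
    have hfn := (hfpos n).le
    have hgn := (hgpos n).le
    have hhn := (hhpos n).le
    rw [hg n, hh n]
    nlinarith [mul_nonneg (mul_nonneg hfn hfn) (mul_nonneg hgn hgn),
      mul_nonneg (mul_nonneg hfn hfn) (mul_nonneg hgn hhn),
      mul_nonneg hfn (mul_nonneg hgn (mul_nonneg hgn hgn))]
  have hshift : Tendsto (fun n => β (n + 1)) atTop (nhds 0) :=
    squeeze_zero (fun n => (hβpos (n + 1)).le) hβα
      (hαtend)
  exact (tendsto_add_atTop_iff_nat 1).mp hshift
end

section
/- Let α(n) = f(n)/g(n). Then for every natural number n ≥ 1, α(n+1) < (6/7)·α(n). -/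
open Filter Real

theorem stmt_7 (f g h : ℕ → ℝ)
    (hf0 : f 0 = 4) (hg0 : g 0 = 1) (hh0 : h 0 = 1)
    (hf : ∀ n : ℕ, f (n + 1) = f n ^ 3 + 6 * f n ^ 2 * g n)
    (hg : ∀ n : ℕ, g (n + 1) = f n ^ 2 * g n + f n ^ 2 * h n + 7 * f n * g n ^ 2)
    (hh : ∀ n : ℕ, h (n + 1) = 3 * f n * g n ^ 2 + 12 * f n * g n * h n + 14 * g n ^ 3)
    (hfpos : ∀ n : ℕ, 0 < f n) (hgpos : ∀ n : ℕ, 0 < g n) (hhpos : ∀ n : ℕ, 0 < h n)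
    (α β : ℕ → ℝ)
    (hα : ∀ n : ℕ, α n = f n / g n) (hβ : ∀ n : ℕ, β n = g n / h n) :
    ∀ n : ℕ, 1 ≤ n → α (n + 1) < 6 / 7 * α n := by
  have key : ∀ n : ℕ, 1 ≤ n → f n ≤ 8 / 3 * g n ∧ g n < 6 * h n := by
    intro n hn
    induction n with
    | zero => omega
    | succ m ih =>
      rcases Nat.eq_or_lt_of_le hn with h1 | h1
      · have hm0 : m = 0 := by omega
        subst hm0
        rw [hf 0, hg 0, hh 0, hf0, hg0, hh0]
        norm_num
      · have hm : 1 ≤ m := by omega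
        obtain ⟨ha, hb⟩ := ih hm
        have fp := hfpos m
        have gp := hgpos m
        have hp := hhpos m
        constructor
        · rw [hf m, hg m]
          nlinarith [mul_pos fp gp, mul_pos fp hp, mul_pos gp gp,
            mul_pos fp (mul_pos fp hp)]
        · rw [hg m, hh m]
          nlinarith [mul_pos fp gp, mul_pos fp hp, mul_pos gp gp,
            mul_pos (mul_pos fp gp) hp, mul_pos gp (mul_pos gp gp),
            mul_pos fp (mul_pos gp gp)]
  intro n hn
  obtain ⟨-, hb⟩ := key n hn
  have fp := hfpos n
  have gp := hgpos n
  have gp1 := hgpos (n + 1)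
  rw [hα, hα, ← mul_div_assoc, div_lt_div_iff₀ gp1 gp, hf n, hg n]
  nlinarith [mul_pos (mul_pos fp (mul_pos fp fp)) (hhpos n),
    mul_pos (mul_pos fp fp) (mul_pos gp gp),
    mul_pos (mul_pos fp (mul_pos fp fp)) gp]
end

section
/- Let α(n) = f(n)/g(n) and β(n) = g(n)/h(n). Then for every natural number n ≥ 4, 3β(n) + α(n)²/27 ≤ α(n). -/
open Filter Real

set_option maxHeartbeats 1600000

theorem stmt_8 (f g h : ℕ → ℝ)
    (hf0 : f 0 = 4) (hg0 : g 0 = 1) (hh0 : h 0 = 1)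
    (hf : ∀ n : ℕ, f (n + 1) = f n ^ 3 + 6 * f n ^ 2 * g n)
    (hg : ∀ n : ℕ, g (n + 1) = f n ^ 2 * g n + f n ^ 2 * h n + 7 * f n * g n ^ 2)
    (hh : ∀ n : ℕ, h (n + 1) = 3 * f n * g n ^ 2 + 12 * f n * g n * h n + 14 * g n ^ 3)
    (hfpos : ∀ n : ℕ, 0 < f n) (hgpos : ∀ n : ℕ, 0 < g n) (hhpos : ∀ n : ℕ, 0 < h n)
    (α β : ℕ → ℝ)
    (hα : ∀ n : ℕ, α n = f n / g n) (hβ : ∀ n : ℕ, β n = g n / h n)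
    (hα4 : α 4 ≤ 3 / 4) (hβ4 : β 4 ≤ 1 / 4) :
    ∀ n : ℕ, 4 ≤ n → 3 * β n + α n ^ 2 / 27 ≤ α n := by
  have key : ∀ n : ℕ, 4 ≤ n →
      4 * f n ≤ 3 * g n ∧ 10 * f n * h n ≤ 31 * (g n) ^ 2 ∧
        81 * (g n) ^ 3 + (f n) ^ 2 * h n ≤ 27 * f n * g n * h n := by
    intro n hn
    induction n, hn using Nat.le_induction with
    | base =>
      have e1f : f 1 = 160 := by rw [hf 0, hf0, hg0]; norm_num
      have e1g : g 1 = 60 := by rw [hg 0, hf0, hg0, hh0]; norm_num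
      have e1h : h 1 = 74 := by rw [hh 0, hf0, hg0, hh0]; norm_num
      have e2f : f 2 = 13312000 := by rw [hf 1, e1f, e1g]; norm_num
      have e2g : g 2 = 7462400 := by rw [hg 1, e1f, e1g, e1h]; norm_num
      have e2h : h 2 = 13276800 := by rw [hh 1, e1f, e1g, e1h]; norm_num
      have e3f : f 3 = 10293452839321600000000 := by rw [hf 2, e2f, e2g]; norm_num
      have e3g : g 3 = 8864355990896640000000 := by rw [hg 2, e2f, e2g, e2h]; norm_num
      have e3h : h 3 = 23868720258482176000000 := by rw [hh 2, e2f, e2g, e2h]; norm_num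
      have e4f : f 4 = 6725990707249427588570157828823324155078246400000000000000000000000 := by
        rw [hf 3, e3f, e3g]; norm_num
      have e4g : g 4 = 9130025312431175838431589260841951989050900480000000000000000000000 := by
        rw [hg 3, e3f, e3g, e3h]; norm_num
      have e4h : h 4 = 38312707016235751510398999787466451205471862784000000000000000000000 := by
        rw [hh 3, e3f, e3g, e3h]; norm_num
      refine ⟨?_, ?_, ?_⟩ <;> simp only [e4f, e4g, e4h] <;> norm_num
    | succ m hm ih =>
      obtain ⟨A, B, C⟩ := ih
      have hF := hfpos m
      have hG := hgpos m
      have hH := hhpos m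
      set F := f m with hFdef
      set G := g m with hGdef
      set H := h m with hHdef
      have hW : (0:ℝ) ≤ 27 * F * G * H - (81 * G ^ 3 + F ^ 2 * H) := by linarith
      have hU : (0:ℝ) ≤ 3 * G - 4 * F := by linarith
      have hV : (0:ℝ) ≤ 31 * G ^ 2 - 10 * F * H := by linarith
      refine ⟨?_, ?_, ?_⟩
      · rw [hf m, hg m]
        nlinarith [mul_pos hF hG, mul_pos hF hH, mul_pos hG hH, sq_nonneg G,
          mul_nonneg (mul_nonneg hF.le hG.le) hH.le,
          mul_nonneg hF.le (sub_nonneg.2 A), mul_nonneg hG.le (sub_nonneg.2 A)]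
      · rw [hf m, hg m, hh m]
        nlinarith [mul_pos hF hG, mul_pos hF hH, mul_pos hG hH, mul_pos (mul_pos hF hG) hH,
          mul_nonneg (mul_nonneg hF.le hF.le) (sub_nonneg.2 B),
          mul_nonneg (mul_nonneg hF.le hG.le) (sub_nonneg.2 B),
          mul_nonneg (mul_nonneg hG.le hG.le) (sub_nonneg.2 B),
          mul_nonneg (mul_nonneg hF.le hH.le) (sub_nonneg.2 B),
          mul_nonneg (mul_nonneg hG.le hH.le) (sub_nonneg.2 B),
          mul_nonneg hF.le (sub_nonneg.2 C), mul_nonneg hG.le (sub_nonneg.2 C),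
          mul_nonneg hH.le (sub_nonneg.2 C),
          mul_nonneg (mul_nonneg (mul_nonneg hF.le hG.le) hH.le) (sub_nonneg.2 A),
          mul_nonneg (mul_nonneg (mul_nonneg hG.le hG.le) hG.le) (sub_nonneg.2 A),
          sq_nonneg (F * G - F * H), sq_nonneg (F * G + F * H + 7 * G ^ 2 - 10 * G ^ 2)]
      · rw [hf m, hg m, hh m]
        have t1 : (0:ℝ) ≤ F ^ 3 * G ^ 3 * (27 * F * G * H - (81 * G ^ 3 + F ^ 2 * H)) :=
          mul_nonneg (by positivity) hW
        have t2 : (0:ℝ) ≤ F ^ 4 * G ^ 5 := by positivity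
        have t3 : (0:ℝ) ≤ F ^ 3 * G ^ 2 * (F * H - 3 * G ^ 2) ^ 2 := by positivity
        have t4 : (0:ℝ) ≤ F ^ 3 * G * ((31 * G ^ 2 - 10 * F * H) *
            (27 * F * G * H - (81 * G ^ 3 + F ^ 2 * H))) :=
          mul_nonneg (by positivity) (mul_nonneg hV hW)
        have t5 : (0:ℝ) ≤ F ^ 4 * G ^ 3 * (31 * G ^ 2 - 10 * F * H) :=
          mul_nonneg (by positivity) hV
        have t6 : (0:ℝ) ≤ F ^ 3 * (F * H - 3 * G ^ 2) ^ 2 * (31 * G ^ 2 - 10 * F * H) :=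
          mul_nonneg (by positivity) hV
        have t7 : (0:ℝ) ≤ F ^ 4 * G ^ 2 * (27 * F * G * H - (81 * G ^ 3 + F ^ 2 * H)) :=
          mul_nonneg (by positivity) hW
        have t8 : (0:ℝ) ≤ F ^ 5 * G ^ 4 := by positivity
        have t9 : (0:ℝ) ≤ F ^ 3 * G * (3 * G - 4 * F) ^ 2 *
            (27 * F * G * H - (81 * G ^ 3 + F ^ 2 * H)) :=
          mul_nonneg (by positivity) hW
        have t10 : (0:ℝ) ≤ F ^ 5 * G ^ 3 * (3 * G - 4 * F) :=
          mul_nonneg (by positivity) hU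
        have t11 : (0:ℝ) ≤ F ^ 4 * G ^ 2 * (3 * G - 4 * F) ^ 3 :=
          mul_nonneg (by positivity) (pow_nonneg hU 3)
        linarith [t1, t2, t3, t4, t5, t6, t7, t8, t9, t10, t11]
  intro n hn
  obtain ⟨A, B, C⟩ := key n hn
  have hF := hfpos n
  have hG := hgpos n
  have hH := hhpos n
  have expand : f n / g n - (3 * β n + α n ^ 2 / 27) =
      (27 * f n * g n * h n - (81 * (g n) ^ 3 + (f n) ^ 2 * h n)) /
        (27 * (g n) ^ 2 * h n) := by
    rw [hα, hβ]
    field_simp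
    ring
  have hnn : (0:ℝ) ≤ f n / g n - (3 * β n + α n ^ 2 / 27) := by
    rw [expand]
    apply div_nonneg (by linarith) (by positivity)
  rw [← hα n] at hnn
  linarith
end

section
/- Let α(n) = f(n)/g(n) and β(n) = g(n)/h(n). Then the sequence of ratios α(n)/β(n) is strictly decreasing: for every natural number n, α(n+1)/β(n+1) < α(n)/β(n). -/
open Filter Real

/-- Key inequality: if `63 g² + 2 f g ≤ 21 f h` (with `f, g > 0`) then the ratio
`f h / g²` strictly decreases under the Sierpinski-gasket recursion. -/
lemma sg_key (f g h : ℝ) (hf : 0 < f) (hg : 0 < g)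
    (hu : 63 * g ^ 2 + 2 * f * g ≤ 21 * f * h) :
    g ^ 3 * (f + 6 * g) * (3 * f * g + 12 * f * h + 14 * g ^ 2)
      < f * h * (f * g + f * h + 7 * g ^ 2) ^ 2 := by
  set u : ℝ := 21 * f * h - 63 * g ^ 2 - 2 * f * g with hu_def
  have hu0 : 0 ≤ u := by simp only [hu_def]; linarith
  have hid : 9261 * (f * h * (f * g + f * h + 7 * g ^ 2) ^ 2
      - g ^ 3 * (f + 6 * g) * (3 * f * g + 12 * f * h + 14 * g ^ 2))
      = 38808 * g ^ 4 * u + 483 * g ^ 2 * u ^ 2 + u ^ 3 + 3528 * f * g ^ 5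
        + 8106 * f * g ^ 3 * u + 48 * f * g * u ^ 2 + 14280 * f ^ 2 * g ^ 4
        + 621 * f ^ 2 * g ^ 2 * u + 1058 * f ^ 3 * g ^ 3 := by
    simp only [hu_def]; ring
  nlinarith [hid, mul_pos hf (pow_pos hg 5), mul_pos (pow_pos hf 2) (pow_pos hg 4),
    mul_pos (pow_pos hf 3) (pow_pos hg 3),
    mul_nonneg (mul_nonneg (by norm_num : (0:ℝ) ≤ 38808) (pow_pos hg 4).le) hu0,
    mul_nonneg (pow_pos hg 2).le (pow_nonneg hu0 2), pow_nonneg hu0 3,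
    mul_nonneg (mul_nonneg hf.le (pow_pos hg 3).le) hu0,
    mul_nonneg (mul_nonneg hf.le hg.le) (pow_nonneg hu0 2),
    mul_nonneg (mul_nonneg (pow_pos hf 2).le (pow_pos hg 2).le) hu0]

/-- Preservation of the invariant region. -/
lemma sg_step (f g h : ℝ) (hf : 0 < f) (hg : 0 < g) (hh : 0 < h)
    (h1 : f ≤ 2 * g) (h2 : f * h ≤ 4 * g ^ 2)
    (h3 : 63 * g ^ 2 + 2 * f * g ≤ 21 * f * h) :
    (f ^ 3 + 6 * f ^ 2 * g) ≤ 2 * (f ^ 2 * g + f ^ 2 * h + 7 * f * g ^ 2) ∧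
    (f ^ 3 + 6 * f ^ 2 * g) * (3 * f * g ^ 2 + 12 * f * g * h + 14 * g ^ 3)
      ≤ 4 * (f ^ 2 * g + f ^ 2 * h + 7 * f * g ^ 2) ^ 2 ∧
    63 * (f ^ 2 * g + f ^ 2 * h + 7 * f * g ^ 2) ^ 2
      + 2 * (f ^ 3 + 6 * f ^ 2 * g) * (f ^ 2 * g + f ^ 2 * h + 7 * f * g ^ 2)
      ≤ 21 * (f ^ 3 + 6 * f ^ 2 * g) * (3 * f * g ^ 2 + 12 * f * g * h + 14 * g ^ 3) := by
  have hw : 0 ≤ 2 * g - f := by linarith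
  have hv : 0 ≤ 4 * g ^ 2 - f * h := by linarith
  have hu : 0 ≤ 21 * f * h - 63 * g ^ 2 - 2 * f * g := by linarith
  refine ⟨?_, ?_, ?_⟩
  · -- f' ≤ 2 g'
    nlinarith [mul_nonneg (mul_nonneg hw hf.le) hf.le,
      mul_nonneg (mul_nonneg hw hf.le) hg.le, mul_pos (mul_pos hf hf) hh,
      mul_nonneg (mul_nonneg hw hg.le) hf.le]
  · -- f' h' ≤ 4 g'²
    have K := sg_key f g h hf hg h3
    -- g² X < f h s² ≤ 4 g² s², so X < 4 s², then multiply by f².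
    have hs : 0 < f * g + f * h + 7 * g ^ 2 := by positivity
    have hX : g ^ 2 * ((f + 6 * g) * g * (3 * f * g + 12 * f * h + 14 * g ^ 2))
        < g ^ 2 * (4 * (f * g + f * h + 7 * g ^ 2) ^ 2) := by
      have h2' : f * h * (f * g + f * h + 7 * g ^ 2) ^ 2
          ≤ 4 * g ^ 2 * (f * g + f * h + 7 * g ^ 2) ^ 2 := by
        apply mul_le_mul_of_nonneg_right _ (sq_nonneg _)
        linarith
      nlinarith [K]
    have hX' : (f + 6 * g) * g * (3 * f * g + 12 * f * h + 14 * g ^ 2)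
        < 4 * (f * g + f * h + 7 * g ^ 2) ^ 2 :=
      lt_of_mul_lt_mul_left hX (sq_nonneg g)
    nlinarith [mul_lt_mul_of_pos_left hX' (pow_pos hf 2)]
  · -- u' ≥ 0
    have hE : 0 ≤ 21 * ((f + 6 * g) * g * (3 * f * g + 12 * f * h + 14 * g ^ 2))
        - 63 * (f * g + f * h + 7 * g ^ 2) ^ 2
        - 2 * f * (f + 6 * g) * (f * g + f * h + 7 * g ^ 2) := by
      have hid : 21 * (21 * ((f + 6 * g) * g * (3 * f * g + 12 * f * h + 14 * g ^ 2))
          - 63 * (f * g + f * h + 7 * g ^ 2) ^ 2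
          - 2 * f * (f + 6 * g) * (f * g + f * h + 7 * g ^ 2))
          = 416 * f * g ^ 3 + 456 * (f * g ^ 2 * (2 * g - f))
            + 46 * (f * g * (2 * g - f) * (2 * g + f))
            + 189 * (g ^ 2 * (21 * f * h - 63 * g ^ 2 - 2 * f * g))
            + 63 * ((21 * f * h - 63 * g ^ 2 - 2 * f * g) * (4 * g ^ 2 - f * h))
            + 104 * (f * g * (21 * f * h - 63 * g ^ 2 - 2 * f * g))
            + 2 * (f * (2 * g - f) * (21 * f * h - 63 * g ^ 2 - 2 * f * g)) := by ring
      nlinarith [hid, mul_pos hf (pow_pos hg 3),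
        mul_nonneg (mul_nonneg hf.le (pow_pos hg 2).le) hw,
        mul_nonneg (mul_nonneg (mul_nonneg hf.le hg.le) hw) (by linarith : (0:ℝ) ≤ 2 * g + f),
        mul_nonneg (pow_pos hg 2).le hu, mul_nonneg hu hv,
        mul_nonneg (mul_nonneg hf.le hg.le) hu,
        mul_nonneg (mul_nonneg hf.le hw) hu]
    nlinarith [mul_nonneg (pow_pos hf 2).le hE]

theorem stmt_9 (f g h : ℕ → ℝ)
    (hf0 : f 0 = 4) (hg0 : g 0 = 1) (hh0 : h 0 = 1)
    (hf : ∀ n : ℕ, f (n + 1) = f n ^ 3 + 6 * f n ^ 2 * g n)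
    (hg : ∀ n : ℕ, g (n + 1) = f n ^ 2 * g n + f n ^ 2 * h n + 7 * f n * g n ^ 2)
    (hh : ∀ n : ℕ, h (n + 1) = 3 * f n * g n ^ 2 + 12 * f n * g n * h n + 14 * g n ^ 3)
    (hfpos : ∀ n : ℕ, 0 < f n) (hgpos : ∀ n : ℕ, 0 < g n) (hhpos : ∀ n : ℕ, 0 < h n)
    (α β : ℕ → ℝ)
    (hα : ∀ n : ℕ, α n = f n / g n) (hβ : ∀ n : ℕ, β n = g n / h n) :
    ∀ n : ℕ, α (n + 1) / β (n + 1) < α n / β n := by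
  -- explicit values at small indices
  have hf1 : f 1 = 160 := by rw [hf 0, hf0, hg0]; norm_num
  have hg1 : g 1 = 60 := by rw [hg 0, hf0, hg0, hh0]; norm_num
  have hh1 : h 1 = 74 := by rw [hh 0, hf0, hg0, hh0]; norm_num
  have hf2 : f 2 = 13312000 := by rw [hf 1, hf1, hg1]; norm_num
  have hg2 : g 2 = 7462400 := by rw [hg 1, hf1, hg1, hh1]; norm_num
  have hh2 : h 2 = 13276800 := by rw [hh 1, hf1, hg1, hh1]; norm_num
  -- invariant from index 2 on
  have hinv : ∀ n : ℕ, f (n + 2) ≤ 2 * g (n + 2) ∧ f (n + 2) * h (n + 2) ≤ 4 * g (n + 2) ^ 2 ∧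
      63 * g (n + 2) ^ 2 + 2 * f (n + 2) * g (n + 2) ≤ 21 * f (n + 2) * h (n + 2) := by
    intro n
    induction n with
    | zero => rw [hf2, hg2, hh2]; norm_num
    | succ m ih =>
      obtain ⟨i1, i2, i3⟩ := ih
      have S := sg_step (f (m + 2)) (g (m + 2)) (h (m + 2)) (hfpos _) (hgpos _) (hhpos _) i1 i2 i3
      rw [show m + 1 + 2 = (m + 2) + 1 by ring, hf (m + 2), hg (m + 2), hh (m + 2)]
      exact ⟨by linarith [S.1], S.2.1, by linarith [S.2.2]⟩
  -- u(n) ≥ 0 for all n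
  have hu : ∀ n : ℕ, 63 * g n ^ 2 + 2 * f n * g n ≤ 21 * f n * h n := by
    intro n
    match n with
    | 0 => rw [hf0, hg0, hh0]; norm_num
    | 1 => rw [hf1, hg1, hh1]; norm_num
    | (m + 2) => exact (hinv m).2.2
  intro n
  have K := sg_key (f n) (g n) (h n) (hfpos n) (hgpos n) (hu n)
  have hmain : f (n + 1) * h (n + 1) * g n ^ 2 < f n * h n * g (n + 1) ^ 2 := by
    rw [hf n, hg n, hh n]
    have hf2p : (0:ℝ) < f n ^ 2 := pow_pos (hfpos n) 2
    calc (f n ^ 3 + 6 * f n ^ 2 * g n) * (3 * f n * g n ^ 2 + 12 * f n * g n * h n + 14 * g n ^ 3) * g n ^ 2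
        = f n ^ 2 * (g n ^ 3 * (f n + 6 * g n) * (3 * f n * g n + 12 * f n * h n + 14 * g n ^ 2)) := by
          ring
      _ < f n ^ 2 * (f n * h n * (f n * g n + f n * h n + 7 * g n ^ 2) ^ 2) :=
          mul_lt_mul_of_pos_left K hf2p
      _ = f n * h n * (f n ^ 2 * g n + f n ^ 2 * h n + 7 * f n * g n ^ 2) ^ 2 := by ring
  have he : ∀ m : ℕ, α m / β m = f m * h m / g m ^ 2 := by
    intro m
    rw [hα m, hβ m]
    field_simp
  rw [he n, he (n + 1)]
  rw [div_lt_div_iff₀ (pow_pos (hgpos (n+1)) 2) (pow_pos (hgpos n) 2)]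
  linarith [hmain]
end

section
/- Let α(n) = f(n)/g(n) and β(n) = g(n)/h(n). Then α(n)/β(n) tends to 3 as n tends to infinity. -/
open Filter Real

set_option maxHeartbeats 1000000 in
theorem stmt_10 (f g h : ℕ → ℝ)
    (hf0 : f 0 = 4) (hg0 : g 0 = 1) (hh0 : h 0 = 1)
    (hf : ∀ n : ℕ, f (n + 1) = f n ^ 3 + 6 * f n ^ 2 * g n)
    (hg : ∀ n : ℕ, g (n + 1) = f n ^ 2 * g n + f n ^ 2 * h n + 7 * f n * g n ^ 2)
    (hh : ∀ n : ℕ, h (n + 1) = 3 * f n * g n ^ 2 + 12 * f n * g n * h n + 14 * g n ^ 3)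
    (hfpos : ∀ n : ℕ, 0 < f n) (hgpos : ∀ n : ℕ, 0 < g n) (hhpos : ∀ n : ℕ, 0 < h n)
    (α β : ℕ → ℝ)
    (hα : ∀ n : ℕ, α n = f n / g n) (hβ : ∀ n : ℕ, β n = g n / h n) :
    Tendsto (fun n => α n / β n) atTop (nhds 3) := by
  -- key invariant
  have key : ∀ n : ℕ, f n ≤ 4 * (15/16 : ℝ)^n * g n ∧
      |f n * h n - 3 * (g n)^2| ≤ 2 * (15/16 : ℝ)^n * (g n)^2 := by
    intro n
    induction n with
    | zero =>
      rw [hf0, hg0, hh0]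
      norm_num [abs_le]
    | succ n ih =>
      obtain ⟨hA, hB⟩ := ih
      set F := f n with hF; set G := g n with hG; set H := h n with hH
      set c : ℝ := (15/16 : ℝ)^n with hc
      have hc0 : (0:ℝ) < c := by positivity
      have hc1 : c ≤ 1 := pow_le_one₀ (by norm_num) (by norm_num)
      have hFp : 0 < F := hfpos n
      have hGp : 0 < G := hgpos n
      have hHp : 0 < H := hhpos n
      rw [abs_le] at hB
      obtain ⟨hB2, hB1⟩ := hB
      have hFH : (3 - 2*c) * G^2 ≤ F * H := by nlinarith
      have hA' : 0 ≤ 4*c*G - F := by linarith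
      have hfn := hf n; have hgn := hg n; have hhn := hh n
      have hpow : ((15:ℝ)/16)^(n+1) = (15/16) * c := by rw [pow_succ]; ring
      constructor
      · -- f(n+1) ≤ 4 (15/16)^{n+1} g(n+1)
        rw [hfn, hgn, hpow]
        nlinarith [mul_nonneg hA' (sq_nonneg F),
          mul_nonneg (mul_nonneg hc0.le hA') (mul_nonneg hFp.le hGp.le),
          mul_nonneg hA' (mul_nonneg hFp.le hGp.le),
          mul_nonneg hc0.le (mul_nonneg hFp.le (sub_nonneg.2 hFH)),
          mul_nonneg (mul_nonneg hc0.le (sub_nonneg.2 hc1)) (mul_nonneg hFp.le (sq_nonneg G)),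
          mul_nonneg hc0.le (mul_nonneg hFp.le (sq_nonneg G))]
      · -- |f(n+1) h(n+1) - 3 g(n+1)^2| ≤ 2 (15/16)^{n+1} g(n+1)^2
        set u : ℝ := F * H - 3 * G^2 with hu
        have hu1 : u ≤ 2 * c * G^2 := hB1
        have hu2 : -(2 * c * G^2) ≤ u := hB2
        have hEq : f (n+1) * h (n+1) - 3 * (g (n+1))^2
            = F^2 * (F*G*(6*u + 8*G^2) - 3*u*(u - 4*G^2)) := by
          rw [hfn, hgn, hhn, hu]; ring
        have hg2 : (g (n+1))^2 = F^2 * (F*G + F*H + 7*G^2)^2 := by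
          rw [hgn]; ring
        have hden : 8 * G^2 ≤ F*G + F*H + 7*G^2 := by
          nlinarith [mul_pos hFp hGp, mul_nonneg (sub_nonneg.2 hc1) (sq_nonneg G)]
        have hdsq : 64 * G^4 ≤ (F*G + F*H + 7*G^2)^2 := by
          nlinarith [mul_le_mul hden hden (by positivity) (by positivity : (0:ℝ) ≤ F*G + F*H + 7*G^2)]
        have ha3 : 0 ≤ c*(1-c)*(G^2)^2 :=
          mul_nonneg (mul_nonneg hc0.le (by linarith)) (sq_nonneg _)
        have ha6 : 0 ≤ c*(G^2)^2 := mul_nonneg hc0.le (sq_nonneg _)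
        have hinner_ub : F*G*(6*u + 8*G^2) - 3*u*(u - 4*G^2) ≤ 116 * c * G^4 := by
          rcases le_or_gt 0 (6*u + 8*G^2) with hpos | hneg
          · nlinarith [mul_nonneg (mul_nonneg hA' hGp.le) hpos,
              mul_nonneg (mul_nonneg hc0.le (sq_nonneg G)) (by linarith : (0:ℝ) ≤ 2*c*G^2 - u),
              mul_nonneg (sq_nonneg G) (by linarith : (0:ℝ) ≤ 2*c*G^2 - u),
              ha3, ha6, sq_nonneg u]
          · nlinarith [mul_nonneg (mul_nonneg hFp.le hGp.le) (by linarith : (0:ℝ) ≤ -(6*u + 8*G^2)),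
              mul_nonneg (sq_nonneg G) (by linarith : (0:ℝ) ≤ 2*c*G^2 - u),
              ha6, sq_nonneg u]
        have hinner_lb : -(116 * c * G^4) ≤ F*G*(6*u + 8*G^2) - 3*u*(u - 4*G^2) := by
          rcases le_or_gt 0 (6*u + 8*G^2) with hpos | hneg
          · nlinarith [mul_nonneg (mul_nonneg hFp.le hGp.le) hpos,
              mul_nonneg (by linarith : (0:ℝ) ≤ 2*c*G^2 - u) (by linarith : (0:ℝ) ≤ 2*c*G^2 + u),
              mul_nonneg (sq_nonneg G) (by linarith : (0:ℝ) ≤ u + 2*c*G^2),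
              ha3, ha6]
          · nlinarith [mul_nonneg (mul_nonneg hA' hGp.le) (by linarith : (0:ℝ) ≤ -(6*u + 8*G^2)),
              mul_nonneg (mul_nonneg hc0.le (sq_nonneg G)) (by linarith : (0:ℝ) ≤ u + 2*c*G^2),
              mul_nonneg (by linarith : (0:ℝ) ≤ 2*c*G^2 - u) (by linarith : (0:ℝ) ≤ 2*c*G^2 + u),
              mul_nonneg (sq_nonneg G) (by linarith : (0:ℝ) ≤ u + 2*c*G^2),
              ha3, ha6]
        have habs : |F*G*(6*u + 8*G^2) - 3*u*(u - 4*G^2)| ≤ 116 * c * G^4 :=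
          abs_le.2 ⟨hinner_lb, hinner_ub⟩
        calc |f (n+1) * h (n+1) - 3 * (g (n+1))^2|
            = F^2 * |F*G*(6*u + 8*G^2) - 3*u*(u - 4*G^2)| := by
              rw [hEq, abs_mul, abs_of_nonneg (sq_nonneg F)]
          _ ≤ F^2 * (116 * c * G^4) :=
              mul_le_mul_of_nonneg_left habs (sq_nonneg F)
          _ ≤ F^2 * ((15/8) * c * (64 * G^4)) := by
              nlinarith [mul_nonneg (sq_nonneg F) (mul_nonneg hc0.le (sq_nonneg (G^2)))]
          _ ≤ F^2 * ((15/8) * c * (F*G + F*H + 7*G^2)^2) := by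
              have : (15/8) * c * (64 * G^4) ≤ (15/8) * c * (F*G + F*H + 7*G^2)^2 :=
                mul_le_mul_of_nonneg_left hdsq (by positivity)
              exact mul_le_mul_of_nonneg_left this (sq_nonneg F)
          _ = 2 * (15/16 : ℝ)^(n+1) * (g (n+1))^2 := by
              rw [hg2, hpow]; ring
  -- conclude convergence
  have hbound : ∀ n : ℕ, ‖α n / β n - 3‖ ≤ 2 * (15/16 : ℝ)^n := by
    intro n
    have hGp := hgpos n; have hHp := hhpos n
    have h2 : α n / β n - 3 = (f n * h n - 3 * (g n)^2) / (g n)^2 := by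
      rw [hα, hβ]; field_simp
    rw [Real.norm_eq_abs, h2, abs_div, abs_of_pos (by positivity : (0:ℝ) < (g n)^2),
      div_le_iff₀ (by positivity : (0:ℝ) < (g n)^2)]
    exact (key n).2
  have hgeo : Tendsto (fun n : ℕ => 2 * (15/16 : ℝ)^n) atTop (nhds 0) := by
    have := tendsto_pow_atTop_nhds_zero_of_lt_one (by norm_num : (0:ℝ) ≤ 15/16)
      (by norm_num : (15/16 : ℝ) < 1)
    simpa using this.const_mul 2
  have h0 : Tendsto (fun n => α n / β n - 3) atTop (nhds 0) :=
    squeeze_zero_norm hbound hgeo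
  have := h0.add (tendsto_const_nhds (x := (3:ℝ)))
  simpa using this
end

section
/- Let α(n) = f(n)/g(n) and β(n) = g(n)/h(n). Then for every natural number m and every natural number n > m, f(n) = f(m)^((3^(n-m)+1)/2) · g(m)^((3^(n-m)-1)/2) · ∏_{i=1}^{n-m} (6 + α(n-i))^((3^(i-1)+1)/2) · ∏_{j=2}^{n-m} (7 + α(n-j) + α(n-j)/β(n-j))^((3^(j-1)-1)/2), where when n-m = 1 the product with lower limit j = 2 is the empty product 1. -/
open Filter Real

theorem stmt_11 (f g h : ℕ → ℝ)
    (hf0 : f 0 = 4) (hg0 : g 0 = 1) (hh0 : h 0 = 1)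
    (hf : ∀ n : ℕ, f (n + 1) = f n ^ 3 + 6 * f n ^ 2 * g n)
    (hg : ∀ n : ℕ, g (n + 1) = f n ^ 2 * g n + f n ^ 2 * h n + 7 * f n * g n ^ 2)
    (hh : ∀ n : ℕ, h (n + 1) = 3 * f n * g n ^ 2 + 12 * f n * g n * h n + 14 * g n ^ 3)
    (hfpos : ∀ n : ℕ, 0 < f n) (hgpos : ∀ n : ℕ, 0 < g n) (hhpos : ∀ n : ℕ, 0 < h n)
    (α β : ℕ → ℝ)
    (hα : ∀ n : ℕ, α n = f n / g n) (hβ : ∀ n : ℕ, β n = g n / h n) :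
    ∀ m n : ℕ, m < n →
      f n = f m ^ ((3 ^ (n - m) + 1) / 2) * g m ^ ((3 ^ (n - m) - 1) / 2) *
        (∏ i ∈ Finset.Icc 1 (n - m), (6 + α (n - i)) ^ ((3 ^ (i - 1) + 1) / 2)) *
        (∏ j ∈ Finset.Icc 2 (n - m),
          (7 + α (n - j) + α (n - j) / β (n - j)) ^ ((3 ^ (j - 1) - 1) / 2)) := by
  set A : ℕ → ℝ := fun k => 6 + α k with hA
  set B : ℕ → ℝ := fun k => 7 + α k + α k / β k with hB
  -- odd powers of 3
  have h3 : ∀ i : ℕ, ∃ t : ℕ, 3 ^ i = 2 * t + 1 := by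
    intro i
    exact (Odd.pow (by decide : Odd 3) : Odd (3 ^ i))
  have hE : ∀ i : ℕ, (3 ^ (i + 1) + 1) / 2 = 2 * ((3 ^ i + 1) / 2) + (3 ^ i - 1) / 2 := by
    intro i; obtain ⟨t, ht⟩ := h3 i
    rw [pow_succ, ht]; omega
  have hO : ∀ i : ℕ, (3 ^ (i + 1) - 1) / 2 = 2 * ((3 ^ i - 1) / 2) + (3 ^ i + 1) / 2 := by
    intro i; obtain ⟨t, ht⟩ := h3 i
    rw [pow_succ, ht]; omega
  -- recursions in product form
  have hf' : ∀ k, f (k + 1) = f k ^ 2 * g k * A k := by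
    intro k
    have hgk := (hgpos k).ne'
    rw [hf k, hA]; simp only [hα k]; field_simp; ring
  have hg' : ∀ k, g (k + 1) = f k * g k ^ 2 * B k := by
    intro k
    have hgk := (hgpos k).ne'
    have hhk := (hhpos k).ne'
    rw [hg k, hB]; simp only [hα k, hβ k]
    field_simp; ring
  -- splitting of products according to exponent decomposition
  have split : ∀ (F : ℕ → ℝ) (a b : ℕ → ℕ) (d : ℕ) (G : ℕ → ℕ),
      ∏ i ∈ Finset.range d, F (G i) ^ (2 * a i + b i) =
        (∏ i ∈ Finset.range d, F (G i) ^ a i) ^ 2 *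
          ∏ i ∈ Finset.range d, F (G i) ^ b i := by
    intro F a b d G
    rw [← Finset.prod_pow, ← Finset.prod_mul_distrib]
    exact Finset.prod_congr rfl fun i _ => by rw [pow_add, pow_mul']
  -- main joint induction
  have key : ∀ d m : ℕ,
      f (m + d) = f m ^ ((3 ^ d + 1) / 2) * g m ^ ((3 ^ d - 1) / 2) *
        (∏ i ∈ Finset.range d, A (m + d - 1 - i) ^ ((3 ^ i + 1) / 2)) *
        (∏ i ∈ Finset.range d, B (m + d - 1 - i) ^ ((3 ^ i - 1) / 2)) ∧
      g (m + d) = f m ^ ((3 ^ d - 1) / 2) * g m ^ ((3 ^ d + 1) / 2) *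
        (∏ i ∈ Finset.range d, A (m + d - 1 - i) ^ ((3 ^ i - 1) / 2)) *
        (∏ i ∈ Finset.range d, B (m + d - 1 - i) ^ ((3 ^ i + 1) / 2)) := by
    intro d
    induction d with
    | zero => intro m; simp
    | succ d ih =>
      intro m
      obtain ⟨ihf, ihg⟩ := ih m
      have hidx : ∀ i : ℕ, m + (d + 1) - 1 - i = m + d - i := fun i => by omega
      have hidx2 : ∀ i : ℕ, m + d - (i + 1) = m + d - 1 - i := fun i => by omega
      have peelA : ∀ E : ℕ → ℕ,
          ∏ i ∈ Finset.range (d + 1), A (m + d + 1 - 1 - i) ^ E i =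
            (∏ i ∈ Finset.range d, A (m + d - 1 - i) ^ E (i + 1)) * A (m + d) ^ E 0 := by
        intro E
        rw [Finset.prod_range_succ' (fun i => A (m + d + 1 - 1 - i) ^ E i) d]
        congr 1
        · exact Finset.prod_congr rfl fun i _ => by
            rw [show m + d + 1 - 1 - (i + 1) = m + d - 1 - i from by omega]
      have peelB : ∀ E : ℕ → ℕ,
          ∏ i ∈ Finset.range (d + 1), B (m + d + 1 - 1 - i) ^ E i =
            (∏ i ∈ Finset.range d, B (m + d - 1 - i) ^ E (i + 1)) * B (m + d) ^ E 0 := by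
        intro E
        rw [Finset.prod_range_succ' (fun i => B (m + d + 1 - 1 - i) ^ E i) d]
        congr 1
        · exact Finset.prod_congr rfl fun i _ => by
            rw [show m + d + 1 - 1 - (i + 1) = m + d - 1 - i from by omega]
      have eA : ∏ i ∈ Finset.range d, A (m + d - 1 - i) ^ ((3 ^ (i + 1) + 1) / 2) =
          (∏ i ∈ Finset.range d, A (m + d - 1 - i) ^ ((3 ^ i + 1) / 2)) ^ 2 *
            ∏ i ∈ Finset.range d, A (m + d - 1 - i) ^ ((3 ^ i - 1) / 2) := by
        rw [← split A (fun i => (3 ^ i + 1) / 2) (fun i => (3 ^ i - 1) / 2) d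
          (fun i => m + d - 1 - i)]
        exact Finset.prod_congr rfl fun i _ => by rw [hE i]
      have oA : ∏ i ∈ Finset.range d, A (m + d - 1 - i) ^ ((3 ^ (i + 1) - 1) / 2) =
          (∏ i ∈ Finset.range d, A (m + d - 1 - i) ^ ((3 ^ i - 1) / 2)) ^ 2 *
            ∏ i ∈ Finset.range d, A (m + d - 1 - i) ^ ((3 ^ i + 1) / 2) := by
        rw [← split A (fun i => (3 ^ i - 1) / 2) (fun i => (3 ^ i + 1) / 2) d
          (fun i => m + d - 1 - i)]
        exact Finset.prod_congr rfl fun i _ => by rw [hO i]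
      have eB : ∏ i ∈ Finset.range d, B (m + d - 1 - i) ^ ((3 ^ (i + 1) + 1) / 2) =
          (∏ i ∈ Finset.range d, B (m + d - 1 - i) ^ ((3 ^ i + 1) / 2)) ^ 2 *
            ∏ i ∈ Finset.range d, B (m + d - 1 - i) ^ ((3 ^ i - 1) / 2) := by
        rw [← split B (fun i => (3 ^ i + 1) / 2) (fun i => (3 ^ i - 1) / 2) d
          (fun i => m + d - 1 - i)]
        exact Finset.prod_congr rfl fun i _ => by rw [hE i]
      have oB : ∏ i ∈ Finset.range d, B (m + d - 1 - i) ^ ((3 ^ (i + 1) - 1) / 2) =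
          (∏ i ∈ Finset.range d, B (m + d - 1 - i) ^ ((3 ^ i - 1) / 2)) ^ 2 *
            ∏ i ∈ Finset.range d, B (m + d - 1 - i) ^ ((3 ^ i + 1) / 2) := by
        rw [← split B (fun i => (3 ^ i - 1) / 2) (fun i => (3 ^ i + 1) / 2) d
          (fun i => m + d - 1 - i)]
        exact Finset.prod_congr rfl fun i _ => by rw [hO i]
      have hfE : f m ^ ((3 ^ (d + 1) + 1) / 2) =
          (f m ^ ((3 ^ d + 1) / 2)) ^ 2 * f m ^ ((3 ^ d - 1) / 2) := by
        rw [hE d, pow_add, pow_mul']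
      have hfO : f m ^ ((3 ^ (d + 1) - 1) / 2) =
          (f m ^ ((3 ^ d - 1) / 2)) ^ 2 * f m ^ ((3 ^ d + 1) / 2) := by
        rw [hO d, pow_add, pow_mul']
      have hgE : g m ^ ((3 ^ (d + 1) + 1) / 2) =
          (g m ^ ((3 ^ d + 1) / 2)) ^ 2 * g m ^ ((3 ^ d - 1) / 2) := by
        rw [hE d, pow_add, pow_mul']
      have hgO : g m ^ ((3 ^ (d + 1) - 1) / 2) =
          (g m ^ ((3 ^ d - 1) / 2)) ^ 2 * g m ^ ((3 ^ d + 1) / 2) := by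
        rw [hO d, pow_add, pow_mul']
      have he0 : (3 ^ 0 + 1) / 2 = 1 := by norm_num
      have ho0 : (3 ^ 0 - 1) / 2 = 0 := by norm_num
      constructor
      · rw [show m + (d + 1) = (m + d) + 1 from rfl, hf' (m + d), ihf, ihg,
          peelA (fun i => (3 ^ i + 1) / 2), peelB (fun i => (3 ^ i - 1) / 2)]
        simp only [eA, oB, hfE, hgO, he0, ho0, pow_one, pow_zero]
        ring
      · rw [show m + (d + 1) = (m + d) + 1 from rfl, hg' (m + d), ihf, ihg,
          peelA (fun i => (3 ^ i - 1) / 2), peelB (fun i => (3 ^ i + 1) / 2)]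
        simp only [oA, eB, hfO, hgE, he0, ho0, pow_one, pow_zero]
        ring
  -- final conversion
  intro m n hmn
  obtain ⟨e, rfl⟩ : ∃ e, n = m + (e + 1) := ⟨n - m - 1, by omega⟩
  have hd : m + (e + 1) - m = e + 1 := by omega
  rw [hd]
  have hIccA : ∏ i ∈ Finset.Icc 1 (e + 1), A (m + (e + 1) - i) ^ ((3 ^ (i - 1) + 1) / 2) =
      ∏ i ∈ Finset.range (e + 1), A (m + (e + 1) - 1 - i) ^ ((3 ^ i + 1) / 2) := by
    rw [← Finset.Ico_add_one_right_eq_Icc, Finset.prod_Ico_eq_prod_range]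
    refine Finset.prod_congr rfl fun i _ => ?_
    rw [show m + (e + 1) - (1 + i) = m + (e + 1) - 1 - i from by omega,
      show 1 + i - 1 = i from by omega]
  have hIccB : ∏ j ∈ Finset.Icc 2 (e + 1), B (m + (e + 1) - j) ^ ((3 ^ (j - 1) - 1) / 2) =
      ∏ i ∈ Finset.range (e + 1), B (m + (e + 1) - 1 - i) ^ ((3 ^ i - 1) / 2) := by
    rw [← Finset.Ico_add_one_right_eq_Icc, Finset.prod_Ico_eq_prod_range,
      Finset.prod_range_succ' (fun i => B (m + (e + 1) - 1 - i) ^ ((3 ^ i - 1) / 2)) e,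
      show ((3 : ℕ) ^ 0 - 1) / 2 = 0 from by norm_num, pow_zero, mul_one]
    refine Finset.prod_congr rfl fun i _ => ?_
    rw [show m + (e + 1) - (2 + i) = m + (e + 1) - 1 - (i + 1) from by omega,
      show 2 + i - 1 = i + 1 from by omega]
  rw [hIccA, hIccB]
  exact (key (e + 1) m).1
end

section
/- Let α(n) = f(n)/g(n) and β(n) = g(n)/h(n). Then for every natural number m and every natural number n > m, g(n) = f(m)^((3^(n-m)-1)/2) · g(m)^((3^(n-m)+1)/2) · ∏_{i=2}^{n-m} (6 + α(n-i))^((3^(i-1)-1)/2) · ∏_{j=1}^{n-m} (7 + α(n-j) + α(n-j)/β(n-j))^((3^(j-1)+1)/2), where when n-m = 1 the product with lower limit i = 2 is the empty product 1. -/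
open Filter Real

theorem stmt_12 (f g h : ℕ → ℝ)
    (hf0 : f 0 = 4) (hg0 : g 0 = 1) (hh0 : h 0 = 1)
    (hf : ∀ n : ℕ, f (n + 1) = f n ^ 3 + 6 * f n ^ 2 * g n)
    (hg : ∀ n : ℕ, g (n + 1) = f n ^ 2 * g n + f n ^ 2 * h n + 7 * f n * g n ^ 2)
    (hh : ∀ n : ℕ, h (n + 1) = 3 * f n * g n ^ 2 + 12 * f n * g n * h n + 14 * g n ^ 3)
    (hfpos : ∀ n : ℕ, 0 < f n) (hgpos : ∀ n : ℕ, 0 < g n) (hhpos : ∀ n : ℕ, 0 < h n)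
    (α β : ℕ → ℝ)
    (hα : ∀ n : ℕ, α n = f n / g n) (hβ : ∀ n : ℕ, β n = g n / h n) :
    ∀ m n : ℕ, m < n →
      g n = f m ^ ((3 ^ (n - m) - 1) / 2) * g m ^ ((3 ^ (n - m) + 1) / 2) *
        (∏ i ∈ Finset.Icc 2 (n - m), (6 + α (n - i)) ^ ((3 ^ (i - 1) - 1) / 2)) *
        (∏ j ∈ Finset.Icc 1 (n - m),
          (7 + α (n - j) + α (n - j) / β (n - j)) ^ ((3 ^ (j - 1) + 1) / 2)) := by
  have hstepf : ∀ m, f (m + 1) = f m ^ 2 * g m * (6 + α m) := by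
    intro m
    have hg' := (hgpos m).ne'
    rw [hf, hα]
    field_simp
    ring
  have hstepg : ∀ m, g (m + 1) = f m * g m ^ 2 * (7 + α m + α m / β m) := by
    intro m
    have hg' := (hgpos m).ne'
    have hh' := (hhpos m).ne'
    rw [hg, hα, hβ]
    field_simp
    ring
  have hodd : ∀ k : ℕ, 3 ^ k % 2 = 1 := by
    intro k
    induction k with
    | zero => rfl
    | succ n ih => rw [pow_succ]; omega
  have e1 : ∀ k : ℕ, (3 ^ (k + 1) - 1) / 2 = 2 * ((3 ^ k - 1) / 2) + (3 ^ k + 1) / 2 := by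
    intro k
    have h1 := hodd k
    have h3 : (3:ℕ) ^ (k + 1) = 3 * 3 ^ k := by rw [pow_succ]; ring
    omega
  have e2 : ∀ k : ℕ, (3 ^ (k + 1) + 1) / 2 = (3 ^ k - 1) / 2 + 2 * ((3 ^ k + 1) / 2) := by
    intro k
    have h1 := hodd k
    have h3 : (3:ℕ) ^ (k + 1) = 3 * 3 ^ k := by rw [pow_succ]; ring
    omega
  have key : ∀ k m : ℕ,
      g (m + (k + 1)) = f m ^ ((3 ^ (k + 1) - 1) / 2) * g m ^ ((3 ^ (k + 1) + 1) / 2) *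
        (∏ i ∈ Finset.Icc 2 (k + 1), (6 + α (m + (k + 1) - i)) ^ ((3 ^ (i - 1) - 1) / 2)) *
        (∏ j ∈ Finset.Icc 1 (k + 1),
          (7 + α (m + (k + 1) - j) + α (m + (k + 1) - j) / β (m + (k + 1) - j)) ^
            ((3 ^ (j - 1) + 1) / 2)) := by
    intro k
    induction k with
    | zero =>
      intro m
      have hempty : Finset.Icc 2 1 = (∅ : Finset ℕ) := by decide
      simp only [hempty, Finset.prod_empty, Finset.Icc_self, Finset.prod_singleton]
      norm_num
      exact hstepg m
    | succ k ih =>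
      intro m
      have hIH := ih (m + 1)
      simp only [show m + 1 + (k + 1) = m + (k + 1 + 1) from by omega] at hIH
      rw [hIH, hstepf m, hstepg m,
        Finset.prod_Icc_succ_top (show 2 ≤ k + 1 + 1 by omega),
        Finset.prod_Icc_succ_top (show 1 ≤ k + 1 + 1 by omega)]
      simp only [show m + (k + 1 + 1) - (k + 1 + 1) = m from by omega,
        show k + 1 + 1 - 1 = k + 1 from rfl]
      rw [show ((3:ℕ) ^ (k + 1 + 1) - 1) / 2
            = 2 * ((3 ^ (k + 1) - 1) / 2) + (3 ^ (k + 1) + 1) / 2 from e1 (k + 1),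
          show ((3:ℕ) ^ (k + 1 + 1) + 1) / 2
            = (3 ^ (k + 1) - 1) / 2 + 2 * ((3 ^ (k + 1) + 1) / 2) from e2 (k + 1)]
      generalize ((3:ℕ) ^ (k + 1) - 1) / 2 = a
      generalize ((3:ℕ) ^ (k + 1) + 1) / 2 = b
      simp only [pow_add, pow_mul, mul_pow]
      ring
  intro m n hmn
  obtain ⟨k, rfl⟩ : ∃ k, n = m + (k + 1) := ⟨n - m - 1, by omega⟩
  simp only [show m + (k + 1) - m = k + 1 from by omega]
  exact key k m
end

section
/- The sequence n ↦ ln(f(n)) / (3(3^n + 1)/2) converges to a limit z, and for every positive integer m this limit satisfies (ln(f(m)·g(m)) + (1/2)·ln 60)/3^(m+1) ≤ z ≤ (ln(f(m)·g(m)) + (1/2)·ln[(6 + α(m))·(7 + α(m) + α(m)/β(m))])/3^(m+1), where α(m) = f(m)/g(m) and β(m) = g(m)/h(m). -/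
open Filter Real

/-- positivity certificate for monotonicity of E -/
lemma SG_S_nonneg (x y w : ℝ) (hx : 0 ≤ x) (hy : 0 ≤ y) (hw : 0 ≤ w) :
    0 ≤ 5280*w*y^8 + 1908*w^2*y^6 + 198*w^3*y^4 + 6*w^4*y^2 + 5920*x*y^9 + 5128*x*w*y^7
      + 1044*x*w^2*y^5 + 64*x*w^3*y^3 + x*w^4*y + 1824*x^2*y^8 + 1108*x^2*w*y^6
      + 143*x^2*w^2*y^4 + 4*x^2*w^3*y^2 + 200*x^3*y^7 + 94*x^3*w*y^5 + 6*x^3*w^2*y^3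
      + 8*x^4*y^6 + 3*x^4*w*y^4 := by positivity

lemma SG_inv1 (x y z : ℝ) (hx : 0 < x) (hy : 0 < y) (_hz : 0 < z)
    (h1 : x ≤ 4*y) (h2 : 3*y^2 ≤ x*z) :
    x^3 + 6*x^2*y ≤ 4*(x^2*y + x^2*z + 7*x*y^2) := by
  nlinarith [mul_nonneg hx.le (sub_nonneg.2 h2), mul_nonneg (sub_nonneg.2 h1) (mul_pos hx hy).le,
    mul_nonneg (sub_nonneg.2 h1) (mul_pos hx hx).le, mul_pos hx hy]

lemma SG_inv2 (x y z : ℝ) (hx : 0 < x) (hy : 0 < y) (_hz : 0 < z)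
    (h2 : 3*y^2 ≤ x*z) (h3 : x*z ≤ 7*y^2) :
    3*(x^2*y + x^2*z + 7*x*y^2)^2 ≤ (x^3 + 6*x^2*y)*(3*x*y^2 + 12*x*y*z + 14*y^3) := by
  have hB : 0 ≤ (x+6*y)*y*(3*x*y+12*x*z+14*y^2) - 3*(x*y+x*z+7*y^2)^2 := by
    nlinarith [mul_nonneg (sub_nonneg.2 h2) (sub_nonneg.2 h3),
      mul_nonneg (mul_nonneg hx.le hy.le) (sub_nonneg.2 h2),
      mul_nonneg (mul_pos hx hy).le (sq_nonneg y), mul_pos (mul_pos hx hy) (mul_pos hy hy)]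
  nlinarith [mul_nonneg (sq_nonneg x) hB]

lemma SG_inv3 (x y z : ℝ) (_hx : 0 < x) (_hy : 0 < y) (_hz : 0 < z) :
    (x^3 + 6*x^2*y)*(3*x*y^2 + 12*x*y*z + 14*y^3) ≤ 7*(x^2*y + x^2*z + 7*x*y^2)^2 := by
  have hB : 0 ≤ 7*(x*y+x*z+7*y^2)^2 - (x+6*y)*y*(3*x*y+12*x*z+14*y^2) := by
    have e : 7*(x*y+x*z+7*y^2)^2 - (x+6*y)*y*(3*x*y+12*x*z+14*y^2)
        = 4*x^2*y^2 + 2*x^2*y*z + 66*x*y^3 + 26*x*y^2*z + 7*x^2*z^2 + 259*y^4 := by ring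
    rw [e]; positivity
  nlinarith [mul_nonneg (sq_nonneg x) hB]

lemma SG_E60 (x y z : ℝ) (hx : 0 < x) (hy : 0 < y) (hz : 0 < z)
    (h2 : 3*y^2 ≤ x*z) :
    60*y^3 ≤ (x + 6*y)*(x*y + x*z + 7*y^2) := by
  nlinarith [mul_nonneg hy.le (sub_nonneg.2 h2), mul_pos (mul_pos hx hx) hy,
    mul_pos (mul_pos hx hx) hz, mul_pos hx (mul_pos hy hy)]

lemma SG_E180 (x y z : ℝ) (hx : 0 < x) (hy : 0 < y) (_hz : 0 < z)
    (h1 : x ≤ 4*y) (h3 : x*z ≤ 7*y^2) :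
    (x + 6*y)*(x*y + x*z + 7*y^2) ≤ 180*y^3 := by
  nlinarith [mul_nonneg (mul_nonneg (sub_nonneg.2 h1) hx.le) hy.le,
    mul_nonneg hx.le (sub_nonneg.2 h3), mul_nonneg (sub_nonneg.2 h1) (sq_nonneg y),
    mul_nonneg hy.le (sub_nonneg.2 h3)]

lemma SG_grow (x y z : ℝ) (hx : 0 < x) (hy : 0 < y) (_hz : 0 < z)
    (h3 : x*z ≤ 7*y^2) :
    3*(x^2*(x*y + x*z + 7*y^2)) ≤ 7*(x^2*(x + 6*y))*y := by
  nlinarith [mul_nonneg (sq_nonneg x) (sub_nonneg.2 h3), mul_pos (mul_pos (mul_pos hx hx) hx) hy,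
    mul_nonneg (sq_nonneg x) (sub_nonneg.2 h3)]

lemma SG_cert (x y z : ℝ) :
    y * ( (x + 6*y)*(x*y + x*z + 7*y^2) * (x^2*y + x^2*z + 7*x*y^2)^3
      - ((x^3 + 6*x^2*y) + 6*(x^2*y + x^2*z + 7*x*y^2))
        * ( (x^3 + 6*x^2*y)*(x^2*y + x^2*z + 7*x*y^2)
          + (x^3 + 6*x^2*y)*(3*x*y^2 + 12*x*y*z + 14*y^3)
          + 7*(x^2*y + x^2*z + 7*x*y^2)^2 ) * y^3 )
    = x^3 * (5280*(x*z-3*y^2)*y^8 + 1908*(x*z-3*y^2)^2*y^6 + 198*(x*z-3*y^2)^3*y^4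
      + 6*(x*z-3*y^2)^4*y^2 + 5920*x*y^9 + 5128*x*(x*z-3*y^2)*y^7
      + 1044*x*(x*z-3*y^2)^2*y^5 + 64*x*(x*z-3*y^2)^3*y^3 + x*(x*z-3*y^2)^4*y
      + 1824*x^2*y^8 + 1108*x^2*(x*z-3*y^2)*y^6 + 143*x^2*(x*z-3*y^2)^2*y^4
      + 4*x^2*(x*z-3*y^2)^3*y^2 + 200*x^3*y^7 + 94*x^3*(x*z-3*y^2)*y^5
      + 6*x^3*(x*z-3*y^2)^2*y^3 + 8*x^4*y^6 + 3*x^4*(x*z-3*y^2)*y^4) := by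
  ring

lemma SG_EQ (F G H : ℝ) (hG : G ≠ 0) (hH : H ≠ 0) :
    (6 + F/G) * (7 + F/G + (F/G)/(G/H)) = (F + 6*G)*(F*G + F*H + 7*G^2) / G^3 := by
  have e1 : (F / G) / (G / H) = F * H / G^2 := by
    rw [div_eq_mul_inv, inv_div, div_mul_div_comm, sq]
  rw [e1, eq_div_iff (pow_ne_zero 3 hG)]
  field_simp
  ring

theorem stmt_13 (f g h : ℕ → ℝ)
    (hf0 : f 0 = 4) (hg0 : g 0 = 1) (hh0 : h 0 = 1)
    (hf : ∀ n : ℕ, f (n + 1) = f n ^ 3 + 6 * f n ^ 2 * g n)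
    (hg : ∀ n : ℕ, g (n + 1) = f n ^ 2 * g n + f n ^ 2 * h n + 7 * f n * g n ^ 2)
    (hh : ∀ n : ℕ, h (n + 1) = 3 * f n * g n ^ 2 + 12 * f n * g n * h n + 14 * g n ^ 3)
    (hfpos : ∀ n : ℕ, 0 < f n) (hgpos : ∀ n : ℕ, 0 < g n) (hhpos : ∀ n : ℕ, 0 < h n)
    (α β : ℕ → ℝ)
    (hα : ∀ n : ℕ, α n = f n / g n) (hβ : ∀ n : ℕ, β n = g n / h n) :
    ∃ z : ℝ, Tendsto (fun n : ℕ => Real.log (f n) / (3 * ((3 : ℝ) ^ n + 1) / 2)) atTop (nhds z) ∧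
      ∀ m : ℕ, 1 ≤ m →
        (Real.log (f m * g m) + (1 / 2) * Real.log 60) / 3 ^ (m + 1) ≤ z ∧
        z ≤ (Real.log (f m * g m) +
              (1 / 2) * Real.log ((6 + α m) * (7 + α m + α m / β m))) / 3 ^ (m + 1) := by
  -- invariants
  have hInv : ∀ n, f n ≤ 4 * g n ∧ 3 * g n ^ 2 ≤ f n * h n ∧ f n * h n ≤ 7 * g n ^ 2 := by
    intro n
    induction n with
    | zero => rw [hf0, hg0, hh0]; norm_num
    | succ n ih =>
      obtain ⟨i1, i2, i3⟩ := ih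
      rw [hf n, hg n, hh n]
      refine ⟨?_, ?_, ?_⟩
      · have := SG_inv1 (f n) (g n) (h n) (hfpos n) (hgpos n) (hhpos n) i1 i2
        nlinarith [this]
      · have := SG_inv2 (f n) (g n) (h n) (hfpos n) (hgpos n) (hhpos n) i2 i3
        nlinarith [this]
      · have := SG_inv3 (f n) (g n) (h n) (hfpos n) (hgpos n) (hhpos n)
        nlinarith [this]
  -- the quantity Q n (= (6+α)(7+α+α/β))
  obtain ⟨N, hN⟩ : ∃ N : ℕ → ℝ, ∀ n, N n = (f n + 6 * g n) * (f n * g n + f n * h n + 7 * g n ^ 2) :=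
    ⟨_, fun n => rfl⟩
  obtain ⟨Q, hQ⟩ : ∃ Q : ℕ → ℝ, ∀ n, Q n = N n / g n ^ 3 := ⟨_, fun n => rfl⟩
  have hgne : ∀ n, g n ≠ 0 := fun n => (hgpos n).ne'
  have hfne : ∀ n, f n ≠ 0 := fun n => (hfpos n).ne'
  have hhne : ∀ n, h n ≠ 0 := fun n => (hhpos n).ne'
  have hQ60 : ∀ n, (60 : ℝ) ≤ Q n := by
    intro n
    rw [hQ n, le_div_iff₀ (pow_pos (hgpos n) 3), hN n]
    have := SG_E60 (f n) (g n) (h n) (hfpos n) (hgpos n) (hhpos n) (hInv n).2.1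
    linarith [this]
  have hQ180 : ∀ n, Q n ≤ 180 := by
    intro n
    rw [hQ n, div_le_iff₀ (pow_pos (hgpos n) 3), hN n]
    have := SG_E180 (f n) (g n) (h n) (hfpos n) (hgpos n) (hhpos n) (hInv n).1 (hInv n).2.2
    linarith [this]
  have hQpos : ∀ n, (0:ℝ) < Q n := fun n => lt_of_lt_of_le (by norm_num) (hQ60 n)
  -- key recurrence
  have hfg : ∀ n, f (n+1) * g (n+1) = (f n * g n) ^ 3 * Q n := by
    intro n
    have hgn := hgne n
    rw [hQ n, hN n, hf n, hg n]
    field_simp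
  -- Q is nonincreasing
  have hQdec : ∀ n, Q (n+1) ≤ Q n := by
    intro n
    rw [hQ n, hQ (n+1), div_le_div_iff₀ (pow_pos (hgpos (n+1)) 3) (pow_pos (hgpos n) 3)]
    have hw : 0 ≤ f n * h n - 3 * g n ^ 2 := by linarith [(hInv n).2.1]
    have hS := SG_S_nonneg (f n) (g n) (f n * h n - 3 * g n ^ 2) (hfpos n).le (hgpos n).le hw
    have key : g n * (N n * g (n+1) ^ 3 - N (n+1) * g n ^ 3)
        = f n ^ 3 * (5280*(f n*h n-3*g n^2)*g n^8 + 1908*(f n*h n-3*g n^2)^2*g n^6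
          + 198*(f n*h n-3*g n^2)^3*g n^4 + 6*(f n*h n-3*g n^2)^4*g n^2 + 5920*f n*g n^9
          + 5128*f n*(f n*h n-3*g n^2)*g n^7 + 1044*f n*(f n*h n-3*g n^2)^2*g n^5
          + 64*f n*(f n*h n-3*g n^2)^3*g n^3 + f n*(f n*h n-3*g n^2)^4*g n
          + 1824*f n^2*g n^8 + 1108*f n^2*(f n*h n-3*g n^2)*g n^6
          + 143*f n^2*(f n*h n-3*g n^2)^2*g n^4 + 4*f n^2*(f n*h n-3*g n^2)^3*g n^2
          + 200*f n^3*g n^7 + 94*f n^3*(f n*h n-3*g n^2)*g n^5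
          + 6*f n^3*(f n*h n-3*g n^2)^2*g n^3 + 8*f n^4*g n^6
          + 3*f n^4*(f n*h n-3*g n^2)*g n^4) := by
      rw [hN n, hN (n+1), hf n, hg n, hh n]
      ring
    have h4 : 0 ≤ g n * (N n * g (n+1) ^ 3 - N (n+1) * g n ^ 3) := by
      rw [key]
      exact mul_nonneg (pow_nonneg (hfpos n).le 3) hS
    nlinarith [h4, hgpos n]
  -- bounds on f/g
  have hu4 : ∀ n, f n / g n ≤ 4 := by
    intro n
    rw [div_le_iff₀ (hgpos n)]
    linarith [(hInv n).1]
  have hupos : ∀ n, 0 < f n / g n := fun n => div_pos (hfpos n) (hgpos n)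
  have hulow : ∀ n, 4 * (3/7 : ℝ)^n ≤ f n / g n := by
    intro n
    induction n with
    | zero => rw [hf0, hg0]; norm_num
    | succ n ih =>
      have key : 3 * (f n * g (n+1)) ≤ 7 * (f (n+1) * g n) := by
        have := SG_grow (f n) (g n) (h n) (hfpos n) (hgpos n) (hhpos n) (hInv n).2.2
        rw [hf n, hg n]
        nlinarith [this]
      have h1 : (3/7:ℝ) * (f n / g n) ≤ f (n+1) / g (n+1) := by
        have e : (3/7:ℝ) * (f n / g n) = (3 * f n) / (7 * g n) := by
          field_simp
        rw [e, div_le_div_iff₀ (by linarith [hgpos n]) (hgpos (n+1))]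
        nlinarith [key]
      calc 4 * (3/7 : ℝ)^(n+1) = (3/7) * (4 * (3/7:ℝ)^n) := by ring
        _ ≤ (3/7) * (f n / g n) := by
            apply mul_le_mul_of_nonneg_left ih (by norm_num)
        _ ≤ f (n+1) / g (n+1) := h1
  -- log recurrence and partial sums
  have ht : ∀ n, Real.log (f (n+1) * g (n+1)) = 3 * Real.log (f n * g n) + Real.log (Q n) := by
    intro n
    rw [hfg n, Real.log_mul (pow_ne_zero 3 (mul_pos (hfpos n) (hgpos n)).ne') (hQpos n).ne',
      Real.log_pow]
    push_cast
    ring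
  obtain ⟨a, ha⟩ : ∃ a : ℕ → ℝ, ∀ n, a n = Real.log (Q n) / 3^(n+2) := ⟨_, fun n => rfl⟩
  have hs : ∀ n, Real.log (f n * g n) / 3^(n+1)
      = Real.log (f 0 * g 0) / 3^(0+1) + ∑ k ∈ Finset.range n, a k := by
    intro n
    induction n with
    | zero => simp
    | succ n ih =>
      rw [Finset.sum_range_succ, ← add_assoc, ← ih, ht n, ha n]
      field_simp
      ring
  -- bounds on log Q
  have hlogQ0 : ∀ n, 0 ≤ Real.log (Q n) := fun n => Real.log_nonneg (by linarith [hQ60 n])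
  have hlogQ180 : ∀ n, Real.log (Q n) ≤ 180 :=
    fun n => le_trans (Real.log_le_sub_one_of_pos (hQpos n)) (by linarith [hQ180 n])
  have hanneg : ∀ n, 0 ≤ a n := by
    intro n; rw [ha n]; exact div_nonneg (hlogQ0 n) (by positivity)
  have habd : ∀ n, a n ≤ 180 * (1/3:ℝ)^n := by
    intro n
    rw [ha n]
    have e : (180:ℝ) * (1/3:ℝ)^n = 180 / 3^n := by
      rw [one_div, inv_pow, div_eq_mul_inv]
    rw [e]
    have h1 : Real.log (Q n) / 3^(n+2) ≤ 180 / 3^(n+2) :=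
      (div_le_div_iff_of_pos_right (by positivity)).2 (hlogQ180 n)
    refine le_trans h1 ?_
    apply div_le_div_of_nonneg_left (by norm_num) (by positivity)
    exact pow_le_pow_right₀ (by norm_num) (by omega)
  have hgeo : Summable (fun k : ℕ => (1/3:ℝ)^k) :=
    summable_geometric_of_lt_one (by norm_num) (by norm_num)
  have hsum : Summable a := Summable.of_nonneg_of_le hanneg habd (hgeo.mul_left 180)
  obtain ⟨z0, hz0⟩ : ∃ z0 : ℝ, z0 = Real.log (f 0 * g 0) / 3^(0+1) + ∑' k, a k := ⟨_, rfl⟩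
  have hshift : ∀ m : ℕ, Summable (fun k => a (k + m)) :=
    fun m => (summable_nat_add_iff m).2 hsum
  have htail : ∀ m : ℕ, z0 = Real.log (f m * g m) / 3^(m+1) + ∑' k, a (k + m) := by
    intro m
    have e := Summable.sum_add_tsum_nat_add' (f := a) (k := m) (hshift m)
    rw [hs m, hz0, ← e]
    ring
  -- tail bounds
  have hpow_split : ∀ m k : ℕ, (3:ℝ)^(k+m+2) = 3^(m+2) * 3^k := by
    intro m k
    rw [← pow_add]
    congr 1
    omega
  have hge : ∀ m : ℕ, Real.log 60 * ((1/2) / 3^(m+1)) ≤ ∑' k, a (k + m) := by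
    intro m
    have h1 : ∀ k : ℕ, Real.log 60 / 3^(m+2) * (1/3:ℝ)^k ≤ a (k + m) := by
      intro k
      rw [ha (k+m)]
      have e : Real.log 60 / 3^(m+2) * (1/3:ℝ)^k = Real.log 60 / 3^(k+m+2) := by
        rw [hpow_split m k, one_div, inv_pow]
        field_simp
      rw [e]
      exact (div_le_div_iff_of_pos_right (by positivity)).2 (Real.log_le_log (by norm_num) (hQ60 (k+m)))
    have h2 := Summable.tsum_le_tsum h1 ((hgeo.mul_left _)) (hshift m)
    rw [tsum_mul_left, tsum_geometric_of_lt_one (by norm_num) (by norm_num)] at h2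
    have e2 : Real.log 60 / 3^(m+2) * ((1:ℝ) - 1/3)⁻¹ = Real.log 60 * ((1/2) / 3^(m+1)) := by
      rw [pow_succ]
      have : (3:ℝ)^(m+1) ≠ 0 := by positivity
      field_simp
      ring
    rw [e2] at h2
    exact h2
  have hQchain : ∀ m k : ℕ, Q (k + m) ≤ Q m := by
    intro m k
    induction k with
    | zero => simp
    | succ k ih =>
      have e : k + 1 + m = (k + m) + 1 := by omega
      rw [e]
      exact le_trans (hQdec (k+m)) ih
  have hle : ∀ m : ℕ, ∑' k, a (k + m) ≤ Real.log (Q m) * ((1/2) / 3^(m+1)) := by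
    intro m
    have h1 : ∀ k : ℕ, a (k + m) ≤ Real.log (Q m) / 3^(m+2) * (1/3:ℝ)^k := by
      intro k
      rw [ha (k+m)]
      have e : Real.log (Q m) / 3^(m+2) * (1/3:ℝ)^k = Real.log (Q m) / 3^(k+m+2) := by
        rw [hpow_split m k, one_div, inv_pow]
        field_simp
      rw [e]
      exact (div_le_div_iff_of_pos_right (by positivity)).2 (Real.log_le_log (hQpos (k+m)) (hQchain m k))
    have h2 := Summable.tsum_le_tsum h1 (hshift m) ((hgeo.mul_left _))
    rw [tsum_mul_left, tsum_geometric_of_lt_one (by norm_num) (by norm_num)] at h2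
    have e2 : Real.log (Q m) / 3^(m+2) * ((1:ℝ) - 1/3)⁻¹ = Real.log (Q m) * ((1/2) / 3^(m+1)) := by
      rw [pow_succ]
      have : (3:ℝ)^(m+1) ≠ 0 := by positivity
      field_simp
      ring
    rw [e2] at h2
    exact h2
  refine ⟨z0, ?_, ?_⟩
  · -- the limit statement
    have hs_tendsto : Tendsto (fun n => Real.log (f n * g n) / 3^(n+1)) atTop (nhds z0) := by
      rw [hz0]
      have h1 := hsum.hasSum.tendsto_sum_nat.const_add (Real.log (f 0 * g 0) / 3^(0+1))
      exact h1.congr fun n => (hs n).symm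
    have hδ : Tendsto (fun n => Real.log (f n / g n) / 3^(n+1)) atTop (nhds 0) := by
      have hb : Tendsto (fun n : ℕ => (3 + 7*(n:ℝ)) / 3^(n+1)) atTop (nhds 0) := by
        have t1 : Tendsto (fun n : ℕ => ((1/3:ℝ))^n) atTop (nhds 0) :=
          tendsto_pow_atTop_nhds_zero_of_lt_one (by norm_num) (by norm_num)
        have t2 : Tendsto (fun n : ℕ => (n:ℝ) * (1/3:ℝ)^n) atTop (nhds 0) :=
          tendsto_self_mul_const_pow_of_lt_one (by norm_num) (by norm_num)
        have h1 : Tendsto (fun n : ℕ => (1/3:ℝ) * (3*(1/3:ℝ)^n + 7*((n:ℝ)*(1/3:ℝ)^n)))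
            atTop (nhds ((1/3) * (3*0 + 7*0))) := ((t1.const_mul 3).add (t2.const_mul 7)).const_mul (1/3)
        have h2 : ((1/3:ℝ) * (3*0 + 7*0)) = 0 := by norm_num
        rw [h2] at h1
        refine h1.congr fun n => ?_
        have key : (1/3:ℝ)^n * 3^n = 1 := by
          rw [one_div, inv_pow, inv_mul_cancel₀ (by positivity)]
        rw [eq_div_iff (by positivity : ((3:ℝ)^(n+1)) ≠ 0), pow_succ]
        nlinarith [key]
      refine tendsto_of_tendsto_of_tendsto_of_le_of_le (f := fun n => Real.log (f n / g n) / 3^(n+1))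
        (by simpa using hb.neg) hb ?_ ?_
      · intro n
        have h3 : (0:ℝ) < 3^(n+1) := by positivity
        have l2 : -(3 + 7*(n:ℝ)) ≤ Real.log (f n / g n) := by
          have hlog := Real.log_le_log (by positivity) (hulow n)
          have e : Real.log (4 * (3/7:ℝ)^n) = Real.log 4 + n * Real.log (3/7:ℝ) := by
            rw [Real.log_mul (by norm_num) (by positivity), Real.log_pow]
          have b1 : (0:ℝ) ≤ Real.log 4 := Real.log_nonneg (by norm_num)
          have b2 : -(4/3 : ℝ) ≤ Real.log (3/7:ℝ) := by
            have e2 : Real.log (3/7:ℝ) = -Real.log (7/3:ℝ) := by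
              rw [← Real.log_inv]
              norm_num
            have h73 : Real.log (7/3:ℝ) ≤ 4/3 :=
              le_trans (Real.log_le_sub_one_of_pos (by norm_num)) (by norm_num)
            rw [e2]
            linarith
          have b3 := mul_le_mul_of_nonneg_left b2 (Nat.cast_nonneg (α := ℝ) n)
          rw [e] at hlog
          nlinarith [hlog, b1, b3, Nat.cast_nonneg (α := ℝ) n]
        calc -((3 + 7*(n:ℝ)) / 3^(n+1)) = (-(3 + 7*(n:ℝ))) / 3^(n+1) := by ring
          _ ≤ Real.log (f n / g n) / 3^(n+1) := (div_le_div_iff_of_pos_right h3).2 l2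
      · intro n
        have l1 : Real.log (f n / g n) ≤ 3 + 7*(n:ℝ) := by
          have := Real.log_le_log (hupos n) (hu4 n)
          have h4 : Real.log 4 ≤ 3 :=
            le_trans (Real.log_le_sub_one_of_pos (by norm_num)) (by norm_num)
          nlinarith [Nat.cast_nonneg (α := ℝ) n]
        have h3 : (0:ℝ) < 3^(n+1) := by positivity
        exact (div_le_div_iff_of_pos_right h3).2 l1
    have hsum2 : Tendsto (fun n => (Real.log (f n * g n) + Real.log (f n / g n)) / 3^(n+1))
        atTop (nhds (z0 + 0)) := by
      exact (hs_tendsto.add hδ).congr fun n => (add_div _ _ _).symm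
    have hr : Tendsto (fun n : ℕ => (3:ℝ)^(n+1) / (3^(n+1) + 3)) atTop (nhds 1) := by
      have h0 : Tendsto (fun n : ℕ => (1:ℝ) + (1/3:ℝ)^n) atTop (nhds (1 + 0)) :=
        tendsto_const_nhds.add (tendsto_pow_atTop_nhds_zero_of_lt_one (by norm_num) (by norm_num))
      rw [add_zero] at h0
      have h1 := h0.inv₀ (by norm_num)
      rw [inv_one] at h1
      refine h1.congr fun n => ?_
      have h3 : (3:ℝ)^n ≠ 0 := by positivity
      rw [one_div, inv_pow, inv_eq_one_div, div_eq_div_iff (by positivity) (by positivity)]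
      field_simp
      ring
    have hfinal := hsum2.mul hr
    rw [add_zero, mul_one] at hfinal
    refine hfinal.congr fun n => ?_
    have e1 : Real.log (f n * g n) + Real.log (f n / g n) = 2 * Real.log (f n) := by
      rw [Real.log_mul (hfne n) (hgne n), Real.log_div (hfne n) (hgne n)]
      ring
    rw [e1]
    rw [div_mul_div_comm, div_eq_div_iff (by positivity) (by positivity)]
    ring
  · -- the bounds
    intro m _
    have hEQ : (6 + α m) * (7 + α m + α m / β m) = Q m := by
      rw [hα m, hβ m, hQ m, hN m]
      exact SG_EQ (f m) (g m) (h m) (hgne m) (hhne m)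
    constructor
    · calc (Real.log (f m * g m) + (1/2) * Real.log 60) / 3^(m+1)
          = Real.log (f m * g m) / 3^(m+1) + Real.log 60 * ((1/2) / 3^(m+1)) := by ring
        _ ≤ Real.log (f m * g m) / 3^(m+1) + ∑' k, a (k+m) := add_le_add_right (hge m) _
        _ = z0 := (htail m).symm
    · rw [hEQ]
      calc z0 = Real.log (f m * g m) / 3^(m+1) + ∑' k, a (k+m) := htail m
        _ ≤ Real.log (f m * g m) / 3^(m+1) + Real.log (Q m) * ((1/2) / 3^(m+1)) :=
            add_le_add_right (hle m) _
        _ = (Real.log (f m * g m) + (1/2) * Real.log (Q m)) / 3^(m+1) := by ring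
end

section
/- Let α(n) = f(n)/g(n) and β(n) = g(n)/h(n). Then: (i) for every n the sequence values satisfy 3β(n) ≤ α(n) ≤ 4β(n); (ii) the sequences α and β are strictly decreasing for n ≥ 1 and both tend to 0 as n tends to infinity; (iii) the ratio α(n)/β(n) is decreasing in n, equals 4 at n = 0, and tends to 3 as n tends to infinity. -/
set_option maxHeartbeats 1000000

open Filter Real

private def Pa (x u : ℝ) : ℝ := x^3 + 15*x^2 + 87*x + 3*x*u + 18*u + 196
private def Qa (x u : ℝ) : ℝ := x^3 + 19*x^2 + x^2*u + 143*x + 18*x*u + 2*u^2 + 89*u + 420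
private def Ra (x u : ℝ) : ℝ := 3*x^3 + 69*x^2 + 6*x^2*u + 693*x + 147*x*u + 3*x*u^2 + 60*u^2 + 924*u + 2700

private lemma lemPQ (x u : ℝ) (hx : 0 ≤ x) (hx4 : x ≤ 4) (hu : 0 ≤ u) :
    8 * Pa x u ≤ 7 * Qa x u := by
  unfold Pa Qa
  nlinarith [mul_nonneg (mul_nonneg hx hx) (by linarith : (0:ℝ) ≤ 4 - x), sq_nonneg x,
    mul_nonneg hx hu, mul_nonneg (mul_nonneg hx hx) hu, sq_nonneg u]

private lemma lemLZ (x u : ℝ) (hs : 0 ≤ x - 4*u) (hu : 0 ≤ u) :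
    3 * (Qa x u)^2 ≤ Pa x u * Ra x u := by
  unfold Pa Qa Ra
  linarith [(mul_nonneg (pow_nonneg hs 1) (pow_nonneg hu 1)), (mul_nonneg (pow_nonneg hs 1) (pow_nonneg hu 2)), (mul_nonneg (pow_nonneg hs 1) (pow_nonneg hu 3)), (mul_nonneg (pow_nonneg hs 1) (pow_nonneg hu 4)), (mul_nonneg (pow_nonneg hs 2) (pow_nonneg hu 1)), (mul_nonneg (pow_nonneg hs 2) (pow_nonneg hu 2)), (mul_nonneg (pow_nonneg hs 2) (pow_nonneg hu 3)), (mul_nonneg (pow_nonneg hs 3) (pow_nonneg hu 1)), (mul_nonneg (pow_nonneg hs 3) (pow_nonneg hu 2)), (mul_nonneg (pow_nonneg hs 4) (pow_nonneg hu 1)), (pow_nonneg hs 1), (pow_nonneg hs 2), (pow_nonneg hs 3), (pow_nonneg hs 4), (pow_nonneg hu 1), (pow_nonneg hu 2), (pow_nonneg hu 3), (pow_nonneg hu 4), (pow_nonneg hu 5)]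

private lemma lemUP (x u : ℝ) (hs : 0 ≤ x - 4*u) (hu : 0 ≤ u) :
    4 * (Pa x u * Ra x u - 3 * (Qa x u)^2) ≤ x * Pa x u * Qa x u := by
  unfold Pa Qa Ra
  linarith [(mul_nonneg (pow_nonneg hs 1) (pow_nonneg hu 1)), (mul_nonneg (pow_nonneg hs 1) (pow_nonneg hu 2)), (mul_nonneg (pow_nonneg hs 1) (pow_nonneg hu 3)), (mul_nonneg (pow_nonneg hs 1) (pow_nonneg hu 4)), (mul_nonneg (pow_nonneg hs 1) (pow_nonneg hu 5)), (mul_nonneg (pow_nonneg hs 1) (pow_nonneg hu 6)), (mul_nonneg (pow_nonneg hs 2) (pow_nonneg hu 1)), (mul_nonneg (pow_nonneg hs 2) (pow_nonneg hu 2)), (mul_nonneg (pow_nonneg hs 2) (pow_nonneg hu 3)), (mul_nonneg (pow_nonneg hs 2) (pow_nonneg hu 4)), (mul_nonneg (pow_nonneg hs 2) (pow_nonneg hu 5)), (mul_nonneg (pow_nonneg hs 3) (pow_nonneg hu 1)), (mul_nonneg (pow_nonneg hs 3) (pow_nonneg hu 2)), (mul_nonneg (pow_nonneg hs 3) (pow_nonneg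 hu 3)), (mul_nonneg (pow_nonneg hs 3) (pow_nonneg hu 4)), (mul_nonneg (pow_nonneg hs 4) (pow_nonneg hu 1)), (mul_nonneg (pow_nonneg hs 4) (pow_nonneg hu 2)), (mul_nonneg (pow_nonneg hs 4) (pow_nonneg hu 3)), (mul_nonneg (pow_nonneg hs 5) (pow_nonneg hu 1)), (mul_nonneg (pow_nonneg hs 5) (pow_nonneg hu 2)), (mul_nonneg (pow_nonneg hs 6) (pow_nonneg hu 1)), (pow_nonneg hs 1), (pow_nonneg hs 2), (pow_nonneg hs 3), (pow_nonneg hs 4), (pow_nonneg hs 5), (pow_nonneg hs 6), (pow_nonneg hs 7), (pow_nonneg hu 1), (pow_nonneg hu 2), (pow_nonneg hu 3), (pow_nonneg hu 4), (pow_nonneg hu 5), (pow_nonneg hu 6), (pow_nonneg hu 7)]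

private lemma lemANTI (x u : ℝ) (hs : 0 ≤ x - 4*u) (hk : 0 ≤ 15*u - x) :
    Pa x u * Ra x u ≤ (3 + u) * (Qa x u)^2 := by
  unfold Pa Qa Ra
  linarith [(mul_nonneg (pow_nonneg hs 1) (pow_nonneg hk 1)), (mul_nonneg (pow_nonneg hs 1) (pow_nonneg hk 2)), (mul_nonneg (pow_nonneg hs 1) (pow_nonneg hk 3)), (mul_nonneg (pow_nonneg hs 1) (pow_nonneg hk 4)), (mul_nonneg (pow_nonneg hs 1) (pow_nonneg hk 5)), (mul_nonneg (pow_nonneg hs 1) (pow_nonneg hk 6)), (mul_nonneg (pow_nonneg hs 2) (pow_nonneg hk 1)), (mul_nonneg (pow_nonneg hs 2) (pow_nonneg hk 2)), (mul_nonneg (pow_nonneg hs 2) (pow_nonneg hk 3)), (mul_nonneg (pow_nonneg hs 2) (pow_nonneg hk 4)), (mul_nonneg (pow_nonneg hs 2) (pow_nonneg hk 5)), (mul_nonneg (pow_nonneg hs 3) (pow_nonneg hk 1)), (mul_nonneg (pow_nonneg hs 3) (pow_nonneg hk 2)), (mul_nonneg (pow_nonneg hs 3) (pow_nonneg hk 3)),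 (mul_nonneg (pow_nonneg hs 3) (pow_nonneg hk 4)), (mul_nonneg (pow_nonneg hs 4) (pow_nonneg hk 1)), (mul_nonneg (pow_nonneg hs 4) (pow_nonneg hk 2)), (mul_nonneg (pow_nonneg hs 4) (pow_nonneg hk 3)), (mul_nonneg (pow_nonneg hs 5) (pow_nonneg hk 1)), (mul_nonneg (pow_nonneg hs 5) (pow_nonneg hk 2)), (mul_nonneg (pow_nonneg hs 6) (pow_nonneg hk 1)), (pow_nonneg hk 1), (pow_nonneg hk 2), (pow_nonneg hk 3), (pow_nonneg hk 4), (pow_nonneg hk 5), (pow_nonneg hk 6), (pow_nonneg hk 7), (pow_nonneg hs 1), (pow_nonneg hs 2), (pow_nonneg hs 3), (pow_nonneg hs 4), (pow_nonneg hs 5), (pow_nonneg hs 6), (pow_nonneg hs 7)]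

private lemma lemSLOW (x u : ℝ) (hs : 0 ≤ x - 4*u) (hk : 0 ≤ 15*u - x) (hw : 0 ≤ 2 - x) :
    x * Pa x u * Qa x u ≤ 15 * (Pa x u * Ra x u - 3 * (Qa x u)^2) := by
  unfold Pa Qa Ra
  linarith [(mul_nonneg (mul_nonneg (pow_nonneg hs 1) (pow_nonneg hk 1)) (pow_nonneg hw 1)), (mul_nonneg (mul_nonneg (pow_nonneg hs 1) (pow_nonneg hk 2)) (pow_nonneg hw 1)), (mul_nonneg (mul_nonneg (pow_nonneg hs 1) (pow_nonneg hk 3)) (pow_nonneg hw 1)), (mul_nonneg (mul_nonneg (pow_nonneg hs 1) (pow_nonneg hk 4)) (pow_nonneg hw 1)), (mul_nonneg (mul_nonneg (pow_nonneg hs 1) (pow_nonneg hk 5)) (pow_nonneg hw 1)), (mul_nonneg (mul_nonneg (pow_nonneg hs 2) (pow_nonneg hk 1)) (pow_nonneg hw 1)), (mul_nonneg (mul_nonneg (pow_nonneg hs 2) (pow_nonneg hk 2)) (pow_nonneg hw 1)), (mul_nonneg (mul_nonneg (pow_nonneg hs 2) (pow_nonneg hk 3)) (pow_nonneg hw 1)),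 (mul_nonneg (mul_nonneg (pow_nonneg hs 2) (pow_nonneg hk 4)) (pow_nonneg hw 1)), (mul_nonneg (mul_nonneg (pow_nonneg hs 3) (pow_nonneg hk 1)) (pow_nonneg hw 1)), (mul_nonneg (mul_nonneg (pow_nonneg hs 3) (pow_nonneg hk 2)) (pow_nonneg hw 1)), (mul_nonneg (mul_nonneg (pow_nonneg hs 3) (pow_nonneg hk 3)) (pow_nonneg hw 1)), (mul_nonneg (mul_nonneg (pow_nonneg hs 4) (pow_nonneg hk 1)) (pow_nonneg hw 1)), (mul_nonneg (mul_nonneg (pow_nonneg hs 4) (pow_nonneg hk 2)) (pow_nonneg hw 1)), (mul_nonneg (mul_nonneg (pow_nonneg hs 5) (pow_nonneg hk 1)) (pow_nonneg hw 1)), (mul_nonneg (pow_nonneg hk 2) (pow_nonneg hw 1)), (mul_nonneg (pow_nonneg hk 3) (pow_nonneg hw 1)), (mul_nonneg (pow_nonneg hk 4) (pow_nonneg hw 1)), (mul_nonneg (pow_nonneg hk 5) (pow_nonneg hw 1)), (mul_nonneg (pow_nonneg hk 6) (pow_nonneg hw 1)), (mul_nonneg (pow_nonneg hs 1) (pow_nonneg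 hk 1)), (mul_nonneg (pow_nonneg hs 1) (pow_nonneg hw 1)), (mul_nonneg (pow_nonneg hs 2) (pow_nonneg hk 1)), (mul_nonneg (pow_nonneg hs 2) (pow_nonneg hw 1)), (mul_nonneg (pow_nonneg hs 3) (pow_nonneg hk 1)), (mul_nonneg (pow_nonneg hs 3) (pow_nonneg hw 1)), (mul_nonneg (pow_nonneg hs 4) (pow_nonneg hw 1)), (mul_nonneg (pow_nonneg hs 5) (pow_nonneg hw 1)), (mul_nonneg (pow_nonneg hs 6) (pow_nonneg hw 1)), (pow_nonneg hk 1), (pow_nonneg hk 2), (pow_nonneg hs 1)]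

private lemma lemBETA (x u : ℝ) (hs : 0 ≤ x - 4*u) (hu : 0 ≤ u) (hw : 0 ≤ 4 - x) :
    8 * (3 + u) * Qa x u ≤ 7 * Ra x u := by
  unfold Qa Ra
  linarith [(mul_nonneg (mul_nonneg (pow_nonneg hs 1) (pow_nonneg hu 1)) (pow_nonneg hw 1)), (mul_nonneg (mul_nonneg (pow_nonneg hs 1) (pow_nonneg hu 2)) (pow_nonneg hw 1)), (mul_nonneg (mul_nonneg (pow_nonneg hs 2) (pow_nonneg hu 1)) (pow_nonneg hw 1)), (mul_nonneg (pow_nonneg hs 1) (pow_nonneg hu 1)), (mul_nonneg (pow_nonneg hs 2) (pow_nonneg hw 1)), (mul_nonneg (pow_nonneg hu 1) (pow_nonneg hw 1)), (mul_nonneg (pow_nonneg hu 2) (pow_nonneg hw 1)), (mul_nonneg (pow_nonneg hu 3) (pow_nonneg hw 1)), (pow_nonneg hs 1), (pow_nonneg hs 2), (pow_nonneg hs 3), (pow_nonneg hu 1)]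

private lemma step (a b c A B C : ℝ) (ha : 0 < a) (hb : 0 < b) (hc : 0 < c)
    (hA : A = a^6 + 15*a^5*b + 3*a^5*c + 78*a^4*b^2 + 18*a^4*b*c + 142*a^3*b^3)
    (hB : B = a^5*b + a^5*c + 16*a^4*b^2 + 18*a^4*b*c + 89*a^3*b^3 + 2*a^4*c^2 +
      77*a^3*b^2*c + 171*a^2*b^4)
    (hC : C = 3*a^4*b^2 + 6*a^4*b*c + 51*a^3*b^3 + 3*a^4*c^2 + 129*a^3*b^2*c +
      279*a^2*b^4 + 60*a^3*b*c^2 + 564*a^2*b^3*c + 468*a*b^5)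
    (h1 : a ≤ 4*b) (h2 : 3*b^2 ≤ a*c) (h3 : 4*(a*c - 3*b^2) ≤ a*b) :
    A ≤ 4*B ∧ 3*B^2 ≤ A*C ∧ 4*(A*C - 3*B^2) ≤ A*B ∧ 8*A*b ≤ 7*a*B ∧ 8*B*c ≤ 7*b*C ∧
    (a ≤ 2*b → a*b ≤ 15*(a*c - 3*b^2) → A*B ≤ 15*(A*C - 3*B^2) ∧ A*C*b^2 ≤ a*c*B^2) ∧
    0 < A ∧ 0 < B ∧ 0 < C := by
  have hb' : b ≠ 0 := hb.ne'
  set x : ℝ := a/b with hxd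
  set u : ℝ := (a*c - 3*b^2)/b^2 with hud
  have hb2 : (0:ℝ) < b^2 := by positivity
  have hx : 0 < x := div_pos ha hb
  have hu : 0 ≤ u := div_nonneg (by linarith) hb2.le
  have hx4 : x ≤ 4 := by rw [hxd, div_le_iff₀ hb]; linarith
  have hab : a = b*x := by rw [hxd]; try field_simp
  have hac : a*c = b^2*(3+u) := by rw [hud]; field_simp; try ring
  have hux : 4*u ≤ x := by
    rw [hud, hxd, ← mul_div_assoc, div_le_div_iff₀ hb2 hb]
    nlinarith [mul_le_mul_of_nonneg_right h3 hb.le]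
  have hsx : 0 ≤ x - 4*u := by linarith
  have hPA : A = b^6*(x^3*Pa x u) := by
    rw [hA, hxd, hud]; unfold Pa; field_simp; ring
  have hQB : B = b^6*(x^2*Qa x u) := by
    rw [hB, hxd, hud]; unfold Qa; field_simp; ring
  have hRC : C = b^6*(x*Ra x u) := by
    rw [hC, hxd, hud]; unfold Ra; field_simp; ring
  have hP : 0 < Pa x u := by unfold Pa; nlinarith [pow_pos hx 3, sq_nonneg x, mul_nonneg hx.le hu]
  have hQ : 0 < Qa x u := by
    unfold Qa
    nlinarith [pow_pos hx 3, sq_nonneg x, mul_nonneg hx.le hu, sq_nonneg u,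
      mul_nonneg (mul_nonneg hx.le hx.le) hu]
  have hR : 0 < Ra x u := by
    unfold Ra
    nlinarith [pow_pos hx 3, sq_nonneg x, mul_nonneg hx.le hu, sq_nonneg u,
      mul_nonneg (mul_nonneg hx.le hx.le) hu, mul_nonneg hx.le (sq_nonneg u)]
  have hpq := lemPQ x u hx.le hx4 hu
  refine ⟨?_, ?_, ?_, ?_, ?_, ?_, ?_, ?_, ?_⟩
  · -- A ≤ 4*B
    rw [hPA, hQB]
    have hxP : x * Pa x u ≤ 4 * Qa x u := by nlinarith
    nlinarith [mul_le_mul_of_nonneg_left hxP (by positivity : (0:ℝ) ≤ b^6*x^2)]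
  · -- 3*B^2 ≤ A*C
    rw [hPA, hQB, hRC]
    nlinarith [mul_le_mul_of_nonneg_left (lemLZ x u hsx hu)
      (by positivity : (0:ℝ) ≤ b^12*x^4)]
  · -- 4*(A*C - 3*B^2) ≤ A*B
    rw [hPA, hQB, hRC]
    nlinarith [mul_le_mul_of_nonneg_left (lemUP x u hsx hu)
      (by positivity : (0:ℝ) ≤ b^12*x^4)]
  · -- 8*A*b ≤ 7*a*B
    rw [hPA, hQB, hab]
    nlinarith [mul_le_mul_of_nonneg_left hpq (by positivity : (0:ℝ) ≤ b^7*x^3)]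
  · -- 8*B*c ≤ 7*b*C
    have key := mul_le_mul_of_nonneg_left (lemBETA x u hsx hu (by linarith))
      (by positivity : (0:ℝ) ≤ b^8*x^2)
    have e1 : 8*B*c*a = b^8*x^2*(8*(3+u)*Qa x u) := by
      rw [hQB]; linear_combination (8*b^6*x^2*Qa x u) * hac
    have e2 : 7*b*C*a = b^8*x^2*(7*Ra x u) := by rw [hRC, hab]; ring
    have h5 : 8*B*c*a ≤ 7*b*C*a := by rw [e1, e2]; linarith
    exact le_of_mul_le_mul_right (by linarith [h5]) ha
  · -- extra invariant implications
    intro h2b h15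
    have hx2 : x ≤ 2 := by rw [hxd, div_le_iff₀ hb]; linarith
    have hkx : 0 ≤ 15*u - x := by
      have : x ≤ 15*u := by
        rw [hud, hxd, ← mul_div_assoc, div_le_div_iff₀ hb hb2]
        nlinarith [mul_le_mul_of_nonneg_right h15 hb.le]
      linarith
    constructor
    · rw [hPA, hQB, hRC]
      nlinarith [mul_le_mul_of_nonneg_left (lemSLOW x u hsx hkx (by linarith))
        (by positivity : (0:ℝ) ≤ b^12*x^4)]
    · rw [hPA, hQB, hRC]
      have key := mul_le_mul_of_nonneg_left (lemANTI x u hsx hkx)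
        (by positivity : (0:ℝ) ≤ b^14*x^4)
      have e3 : a*c*(b^6*(x^2*Qa x u))^2 = b^14*x^4*((3+u)*(Qa x u)^2) := by
        linear_combination ((b^6*x^2*Qa x u)^2) * hac
      nlinarith [key, e3]
  · rw [hPA]; positivity
  · rw [hQB]; positivity
  · rw [hRC]; positivity
theorem stmt_16 (f g h : ℕ → ℝ)
    (hf0 : f 0 = 4) (hg0 : g 0 = 1) (hh0 : h 0 = 1)
    (hf : ∀ n : ℕ, f (n + 1) = f n ^ 6 + 15 * f n ^ 5 * g n + 3 * f n ^ 5 * h n +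
      78 * f n ^ 4 * g n ^ 2 + 18 * f n ^ 4 * g n * h n + 142 * f n ^ 3 * g n ^ 3)
    (hg : ∀ n : ℕ, g (n + 1) = f n ^ 5 * g n + f n ^ 5 * h n + 16 * f n ^ 4 * g n ^ 2 +
      18 * f n ^ 4 * g n * h n + 89 * f n ^ 3 * g n ^ 3 + 2 * f n ^ 4 * h n ^ 2 +
      77 * f n ^ 3 * g n ^ 2 * h n + 171 * f n ^ 2 * g n ^ 4)
    (hh : ∀ n : ℕ, h (n + 1) = 3 * f n ^ 4 * g n ^ 2 + 6 * f n ^ 4 * g n * h n +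
      51 * f n ^ 3 * g n ^ 3 + 3 * f n ^ 4 * h n ^ 2 + 129 * f n ^ 3 * g n ^ 2 * h n +
      279 * f n ^ 2 * g n ^ 4 + 60 * f n ^ 3 * g n * h n ^ 2 +
      564 * f n ^ 2 * g n ^ 3 * h n + 468 * f n * g n ^ 5)
    (hfpos : ∀ n : ℕ, 0 < f n) (hgpos : ∀ n : ℕ, 0 < g n) (hhpos : ∀ n : ℕ, 0 < h n)
    (α β : ℕ → ℝ)
    (hα : ∀ n : ℕ, α n = f n / g n) (hβ : ∀ n : ℕ, β n = g n / h n) :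
    (∀ n : ℕ, 3 * β n ≤ α n ∧ α n ≤ 4 * β n) ∧
    (∀ n : ℕ, 1 ≤ n → α (n + 1) < α n) ∧ (∀ n : ℕ, 1 ≤ n → β (n + 1) < β n) ∧
    Tendsto α atTop (nhds 0) ∧ Tendsto β atTop (nhds 0) ∧
    Antitone (fun n : ℕ => α n / β n) ∧ α 0 / β 0 = 4 ∧
    Tendsto (fun n : ℕ => α n / β n) atTop (nhds 3) := by
  have hW : ∀ n, f n ≤ 4*g n ∧ 3*(g n)^2 ≤ f n*h n ∧ 4*(f n*h n - 3*(g n)^2) ≤ f n*g n := by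
    intro n
    induction n with
    | zero => rw [hf0, hg0, hh0]; norm_num
    | succ k ih =>
      have st := step (f k) (g k) (h k) (f (k+1)) (g (k+1)) (h (k+1)) (hfpos k) (hgpos k)
        (hhpos k) (hf k) (hg k) (hh k) ih.1 ih.2.1 ih.2.2
      exact ⟨st.1, st.2.1, st.2.2.1⟩
  have hst := fun n => step (f n) (g n) (h n) (f (n+1)) (g (n+1)) (h (n+1)) (hfpos n)
    (hgpos n) (hhpos n) (hf n) (hg n) (hh n) (hW n).1 (hW n).2.1 (hW n).2.2
  have hαpos : ∀ n, 0 < α n := fun n => by rw [hα]; exact div_pos (hfpos n) (hgpos n)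
  have hβpos : ∀ n, 0 < β n := fun n => by rw [hβ]; exact div_pos (hgpos n) (hhpos n)
  have hf1 : f 1 = 56192 := by
    have e := hf 0; rw [hf0, hg0, hh0] at e; norm_num at e; exact e
  have hg1 : g 1 = 24624 := by
    have e := hg 0; rw [hf0, hg0, hh0] at e; norm_num at e; exact e
  have hh1 : h 1 = 33792 := by
    have e := hh 0; rw [hf0, hg0, hh0] at e; norm_num at e; exact e
  have hf2 : f 2 = 1292237078102059106775347494912 := by
    have e := hf 1; rw [hf1, hg1, hh1] at e; norm_num at e; exact e
  have hg2 : g 2 = 1015755670321368497188308516864 := by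
    have e := hg 1; rw [hf1, hg1, hh1] at e; norm_num at e; exact e
  have hh2 : h 2 = 2465934182960517405173530755072 := by
    have e := hh 1; rw [hf1, hg1, hh1] at e; norm_num at e; exact e
  have part1 : ∀ n, 3 * β n ≤ α n ∧ α n ≤ 4 * β n := by
    intro n
    have hgn := hgpos n; have hhn := hhpos n
    constructor
    · rw [hα, hβ, show 3*(g n/h n) = (3*g n)/h n by ring, div_le_div_iff₀ hhn hgn]
      nlinarith [(hW n).2.1]
    · rw [hα, hβ, show 4*(g n/h n) = (4*g n)/h n by ring, div_le_div_iff₀ hgn hhn]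
      nlinarith [(hW n).2.2, mul_nonneg (by linarith [(hW n).1] : (0:ℝ) ≤ 4*g n - f n) hgn.le]
  have hαdec : ∀ n, α (n+1) < α n := by
    intro n
    rw [hα, hα, div_lt_div_iff₀ (hgpos (n+1)) (hgpos n)]
    linarith [(hst n).2.2.2.1, mul_pos (hfpos n) (hgpos (n+1))]
  have hβdec : ∀ n, β (n+1) < β n := by
    intro n
    rw [hβ, hβ, div_lt_div_iff₀ (hhpos (n+1)) (hhpos n)]
    linarith [(hst n).2.2.2.2.1, mul_pos (hgpos n) (hhpos (n+1))]
  have hαgeo : ∀ n, α n ≤ 4*(7/8:ℝ)^n := by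
    intro n
    induction n with
    | zero => rw [hα, hf0, hg0]; norm_num
    | succ k ih =>
      have h78 : α (k+1) ≤ (7/8)*α k := by
        rw [hα, hα, show (7/8:ℝ)*(f k/g k) = (7*f k)/(8*g k) by ring,
          div_le_div_iff₀ (hgpos (k+1)) (by linarith [hgpos k])]
        linarith [(hst k).2.2.2.1]
      calc α (k+1) ≤ (7/8)*α k := h78
        _ ≤ (7/8)*(4*(7/8:ℝ)^k) := by linarith
        _ = 4*(7/8:ℝ)^(k+1) := by ring
  have hβgeo : ∀ n, β n ≤ (7/8:ℝ)^n := by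
    intro n
    induction n with
    | zero => rw [hβ, hg0, hh0]; norm_num
    | succ k ih =>
      have h78 : β (k+1) ≤ (7/8)*β k := by
        rw [hβ, hβ, show (7/8:ℝ)*(g k/h k) = (7*g k)/(8*h k) by ring,
          div_le_div_iff₀ (hhpos (k+1)) (by linarith [hhpos k])]
        linarith [(hst k).2.2.2.2.1]
      calc β (k+1) ≤ (7/8)*β k := h78
        _ ≤ (7/8)*(7/8:ℝ)^k := by linarith
        _ = (7/8:ℝ)^(k+1) := by ring
  have hpow : Tendsto (fun n : ℕ => (7/8:ℝ)^n) atTop (nhds 0) :=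
    tendsto_pow_atTop_nhds_zero_of_lt_one (by norm_num) (by norm_num)
  have hαt : Tendsto α atTop (nhds 0) := by
    have hg4 : Tendsto (fun n : ℕ => (4:ℝ)*(7/8)^n) atTop (nhds 0) := by
      simpa using hpow.const_mul (4:ℝ)
    exact tendsto_of_tendsto_of_tendsto_of_le_of_le tendsto_const_nhds hg4
      (fun n => (hαpos n).le) hαgeo
  have hβt : Tendsto β atTop (nhds 0) :=
    tendsto_of_tendsto_of_tendsto_of_le_of_le tendsto_const_nhds hpow
      (fun n => (hβpos n).le) hβgeo
  have hq : ∀ m, α m / β m = f m * h m / (g m)^2 := by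
    intro m
    rw [hα, hβ, div_div_eq_mul_div]; ring
  have hub : ∀ m, f (m+1)*h (m+1)*(g m)^2 ≤ f m*h m*(g (m+1))^2 →
      α (m+1)/β (m+1) ≤ α m/β m := by
    intro m hm
    rw [hq, hq, div_le_div_iff₀ (pow_pos (hgpos (m+1)) 2) (pow_pos (hgpos m) 2)]
    exact hm
  have hV : ∀ n, f (n+2) ≤ 2*g (n+2) ∧
      f (n+2)*g (n+2) ≤ 15*(f (n+2)*h (n+2) - 3*(g (n+2))^2) := by
    intro n
    induction n with
    | zero =>
      constructor
      · rw [hf2, hg2]; norm_num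
      · rw [hf2, hg2, hh2]; norm_num
    | succ k ih =>
      have st := hst (k+2)
      have h6 := st.2.2.2.2.2.1 ih.1 ih.2
      refine ⟨?_, h6.1⟩
      nlinarith [st.2.2.2.1, mul_nonneg (by linarith [ih.1] : (0:ℝ) ≤ 2*g (k+2) - f (k+2))
        st.2.2.2.2.2.2.2.1.le, mul_pos (hgpos (k+2)) st.2.2.2.2.2.2.2.1, hgpos (k+2)]
  have hanti : ∀ n : ℕ, α (n+1)/β (n+1) ≤ α n/β n := by
    intro n
    match n with
    | 0 => exact hub 0 (by rw [hf1, hh1, hg0, hf0, hh0, hg1]; norm_num)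
    | 1 => exact hub 1 (by rw [hf2, hh2, hg1, hf1, hh1, hg2]; norm_num)
    | (m+2) => exact hub (m+2) (((hst (m+2)).2.2.2.2.2.1 (hV m).1 (hV m).2).2)
  have hrat_lo : ∀ n, 3 ≤ α n/β n := fun n =>
    (le_div_iff₀ (hβpos n)).mpr (by linarith [(part1 n).1])
  have hrat_hi : ∀ n, α n/β n ≤ 3 + α n/4 := by
    intro n
    have h1 := (hgpos n).ne'
    rw [hq, hα, show (3:ℝ) + f n/g n/4 = (12*g n + f n)/(4*g n) by field_simp; ring,
      div_le_div_iff₀ (pow_pos (hgpos n) 2) (by linarith [hgpos n])]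
    nlinarith [mul_le_mul_of_nonneg_right (hW n).2.2 (hgpos n).le]
  have hupt : Tendsto (fun n : ℕ => 3 + α n/4) atTop (nhds 3) := by
    have h30 : Tendsto (fun _ : ℕ => (3:ℝ)) atTop (nhds 3) := tendsto_const_nhds
    have := h30.add (hαt.div_const (4:ℝ))
    simpa using this
  have hratt : Tendsto (fun n : ℕ => α n/β n) atTop (nhds 3) :=
    tendsto_of_tendsto_of_tendsto_of_le_of_le tendsto_const_nhds hupt hrat_lo hrat_hi
  refine ⟨part1, fun n _ => hαdec n, fun n _ => hβdec n, hαt, hβt,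
    antitone_nat_of_succ_le hanti, ?_, hratt⟩
  rw [hα, hβ, hf0, hg0, hh0]; norm_num
end

section
/- The sequence n ↦ ln(f(n)) / ((7·6^n + 8)/5) converges to a limit z, and for every positive integer m this limit satisfies [2·ln f(m) + 3·ln g(m)]/(7·6^m) + [2·ln 196 + 3·ln 420]/(35·6^m) ≤ z ≤ [2·ln f(m) + 3·ln g(m)]/(7·6^m) + [2·ln P(m) + 3·ln Q(m)]/(35·6^m), where, writing α = f(m)/g(m) and β = g(m)/h(m), P(m) = 142 + 18α/β + 78α + 3α²/β + 15α² + α³ and Q(m) = 171 + 77α/β + 2α²/β² + 89α + 18α²/β + 16α² + α³/β + α³. -/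
set_option maxHeartbeats 4000000

open Filter Real

noncomputable def Pp (a s : ℝ) : ℝ := a^3+15*a^2+87*a+3*a*s+18*s+196
noncomputable def Qp (a s : ℝ) : ℝ := a^3+a^2*s+19*a^2+18*a*s+143*a+2*s^2+89*s+420
noncomputable def Rp (a s : ℝ) : ℝ := 3*a^3+6*a^2*s+69*a^2+3*a*s^2+147*a*s+693*a+60*s^2+924*s+2700
noncomputable def Ap (a s : ℝ) : ℝ := Pp a s * Rp a s - 3*(Qp a s)^2

lemma certL1 (a s : ℝ) (ha : 0 < a) (ha2 : a ≤ 23/10) (hs1 : a ≤ 18*s) (hs2 : 10*s ≤ 3*a) :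
    a * Pp a s * Qp a s ≤ 18 * Ap a s := by
  have h0 : (0:ℝ) ≤ a := ha.le
  have h1 : (0:ℝ) ≤ 23 - 10*a := by linarith
  have h2 : (0:ℝ) ≤ 18*s - a := by linarith
  have h3 : (0:ℝ) ≤ 27*a - 90*s := by linarith
  have key : (910097179585298496:ℝ) * a^4 * (18 * Ap a s - (a * Pp a s * Qp a s)) =
      (2879701632:ℝ) * a * (23 - 10*a) ^ 6 * (27*a - 90*s) ^ 4 +
      (60725676672:ℝ) * a * (23 - 10*a) ^ 6 * (18*s - a) * (27*a - 90*s) ^ 3 +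
      (478929905280:ℝ) * a * (23 - 10*a) ^ 6 * (18*s - a) ^ 2 * (27*a - 90*s) ^ 2 +
      (1674724118400:ℝ) * a * (23 - 10*a) ^ 6 * (18*s - a) ^ 3 * (27*a - 90*s) +
      (2191269024000:ℝ) * a * (23 - 10*a) ^ 6 * (18*s - a) ^ 4 +
      (193097296926:ℝ) * a ^ 2 * (23 - 10*a) ^ 5 * (27*a - 90*s) ^ 4 +
      (4137717744720:ℝ) * a ^ 2 * (23 - 10*a) ^ 5 * (18*s - a) * (27*a - 90*s) ^ 3 +
      (33094500914484:ℝ) * a ^ 2 * (23 - 10*a) ^ 5 * (18*s - a) ^ 2 * (27*a - 90*s) ^ 2 +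
      (117164826753840:ℝ) * a ^ 2 * (23 - 10*a) ^ 5 * (18*s - a) ^ 3 * (27*a - 90*s) +
      (154990518418350:ℝ) * a ^ 2 * (23 - 10*a) ^ 5 * (18*s - a) ^ 4 +
      (5269673900556:ℝ) * a ^ 3 * (23 - 10*a) ^ 4 * (27*a - 90*s) ^ 4 +
      (115148388986820:ℝ) * a ^ 3 * (23 - 10*a) ^ 4 * (18*s - a) * (27*a - 90*s) ^ 3 +
      (936362530400796:ℝ) * a ^ 3 * (23 - 10*a) ^ 4 * (18*s - a) ^ 2 * (27*a - 90*s) ^ 2 +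
      (3362338555348284:ℝ) * a ^ 3 * (23 - 10*a) ^ 4 * (18*s - a) ^ 3 * (27*a - 90*s) +
      (4502631952226520:ℝ) * a ^ 3 * (23 - 10*a) ^ 4 * (18*s - a) ^ 4 +
      (74229795114651:ℝ) * a ^ 4 * (23 - 10*a) ^ 3 * (27*a - 90*s) ^ 4 +
      (1663380557084664:ℝ) * a ^ 4 * (23 - 10*a) ^ 3 * (18*s - a) * (27*a - 90*s) ^ 3 +
      (13805871058450746:ℝ) * a ^ 4 * (23 - 10*a) ^ 3 * (18*s - a) ^ 2 * (27*a - 90*s) ^ 2 +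
      (50420425281989400:ℝ) * a ^ 4 * (23 - 10*a) ^ 3 * (18*s - a) ^ 3 * (27*a - 90*s) +
      (68484143727195867:ℝ) * a ^ 4 * (23 - 10*a) ^ 3 * (18*s - a) ^ 4 +
      (560287525449150:ℝ) * a ^ 5 * (23 - 10*a) ^ 2 * (27*a - 90*s) ^ 4 +
      (13003463284773624:ℝ) * a ^ 5 * (23 - 10*a) ^ 2 * (18*s - a) * (27*a - 90*s) ^ 3 +
      (110877767640866628:ℝ) * a ^ 5 * (23 - 10*a) ^ 2 * (18*s - a) ^ 2 * (27*a - 90*s) ^ 2 +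
      (413668370844430920:ℝ) * a ^ 5 * (23 - 10*a) ^ 2 * (18*s - a) ^ 3 * (27*a - 90*s) +
      (571646253079214910:ℝ) * a ^ 5 * (23 - 10*a) ^ 2 * (18*s - a) ^ 4 +
      (2082380149107873:ℝ) * a ^ 6 * (23 - 10*a) * (27*a - 90*s) ^ 4 +
      (51068955099874032:ℝ) * a ^ 6 * (23 - 10*a) * (18*s - a) * (27*a - 90*s) ^ 3 +
      (452850053997523230:ℝ) * a ^ 6 * (23 - 10*a) * (18*s - a) ^ 2 * (27*a - 90*s) ^ 2 +
      (1739566767266269200:ℝ) * a ^ 6 * (23 - 10*a) * (18*s - a) ^ 3 * (27*a - 90*s) +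
      (2458668107562516225:ℝ) * a ^ 6 * (23 - 10*a) * (18*s - a) ^ 4 +
      (2754032225657652:ℝ) * a ^ 7 * (27*a - 90*s) ^ 4 +
      (75199221334724796:ℝ) * a ^ 7 * (18*s - a) * (27*a - 90*s) ^ 3 +
      (712803356982560340:ℝ) * a ^ 7 * (18*s - a) ^ 2 * (27*a - 90*s) ^ 2 +
      (2865222298673453700:ℝ) * a ^ 7 * (18*s - a) ^ 3 * (27*a - 90*s) +
      (4184506184199219000:ℝ) * a ^ 7 * (18*s - a) ^ 4 := by
    simp only [Pp, Qp, Rp, Ap]; ring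
  have hsum : (0:ℝ) ≤ (910097179585298496:ℝ) * a^4 * (18 * Ap a s - (a * Pp a s * Qp a s)) := by
    rw [key]
    repeat' apply add_nonneg
    all_goals repeat' apply mul_nonneg
    all_goals
      first
        | exact pow_nonneg h0 _ | exact pow_nonneg h1 _ | exact pow_nonneg h2 _
        | exact pow_nonneg h3 _ | exact h0 | exact h1 | exact h2 | exact h3 | norm_num
  have hpos : (0:ℝ) < (910097179585298496:ℝ) * a^4 := by positivity
  nlinarith [hsum, hpos]

lemma certL2 (a s : ℝ) (ha : 0 < a) (ha2 : a ≤ 23/10) (hs1 : a ≤ 18*s) (hs2 : 10*s ≤ 3*a) :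
    10 * Ap a s ≤ 3 * (a * Pp a s * Qp a s) := by
  have h0 : (0:ℝ) ≤ a := ha.le
  have h1 : (0:ℝ) ≤ 23 - 10*a := by linarith
  have h2 : (0:ℝ) ≤ 18*s - a := by linarith
  have h3 : (0:ℝ) ≤ 27*a - 90*s := by linarith
  have key : (910097179585298496:ℝ) * a^4 * (3 * (a * Pp a s * Qp a s) - (10 * Ap a s)) =
      (3681158400:ℝ) * a * (23 - 10*a) ^ 6 * (27*a - 90*s) ^ 4 +
      (71883365760:ℝ) * a * (23 - 10*a) ^ 6 * (18*s - a) * (27*a - 90*s) ^ 3 +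
      (526076726400:ℝ) * a * (23 - 10*a) ^ 6 * (18*s - a) ^ 2 * (27*a - 90*s) ^ 2 +
      (1710094032000:ℝ) * a * (23 - 10*a) ^ 6 * (18*s - a) ^ 3 * (27*a - 90*s) +
      (2083248720000:ℝ) * a * (23 - 10*a) ^ 6 * (18*s - a) ^ 4 +
      (306902735946:ℝ) * a ^ 2 * (23 - 10*a) ^ 5 * (27*a - 90*s) ^ 4 +
      (6029939973456:ℝ) * a ^ 2 * (23 - 10*a) ^ 5 * (18*s - a) * (27*a - 90*s) ^ 3 +
      (44417395164060:ℝ) * a ^ 2 * (23 - 10*a) ^ 5 * (18*s - a) ^ 2 * (27*a - 90*s) ^ 2 +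
      (145379821604400:ℝ) * a ^ 2 * (23 - 10*a) ^ 5 * (18*s - a) ^ 3 * (27*a - 90*s) +
      (178392515636250:ℝ) * a ^ 2 * (23 - 10*a) ^ 5 * (18*s - a) ^ 4 +
      (10650933593028:ℝ) * a ^ 3 * (23 - 10*a) ^ 4 * (27*a - 90*s) ^ 4 +
      (210489579847332:ℝ) * a ^ 3 * (23 - 10*a) ^ 4 * (18*s - a) * (27*a - 90*s) ^ 3 +
      (1560033755573292:ℝ) * a ^ 3 * (23 - 10*a) ^ 4 * (18*s - a) ^ 2 * (27*a - 90*s) ^ 2 +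
      (5139082821989340:ℝ) * a ^ 3 * (23 - 10*a) ^ 4 * (18*s - a) ^ 3 * (27*a - 90*s) +
      (6348934205888400:ℝ) * a ^ 3 * (23 - 10*a) ^ 4 * (18*s - a) ^ 4 +
      (196958142476007:ℝ) * a ^ 4 * (23 - 10*a) ^ 3 * (27*a - 90*s) ^ 4 +
      (3914129787701760:ℝ) * a ^ 4 * (23 - 10*a) ^ 3 * (18*s - a) * (27*a - 90*s) ^ 3 +
      (29178927881251434:ℝ) * a ^ 4 * (23 - 10*a) ^ 3 * (18*s - a) ^ 2 * (27*a - 90*s) ^ 2 +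
      (96708467875518576:ℝ) * a ^ 4 * (23 - 10*a) ^ 3 * (18*s - a) ^ 3 * (27*a - 90*s) +
      (120236612267305215:ℝ) * a ^ 4 * (23 - 10*a) ^ 3 * (18*s - a) ^ 4 +
      (2046930536744136:ℝ) * a ^ 5 * (23 - 10*a) ^ 2 * (27*a - 90*s) ^ 4 +
      (40897051714587708:ℝ) * a ^ 5 * (23 - 10*a) ^ 2 * (18*s - a) * (27*a - 90*s) ^ 3 +
      (306579385503454716:ℝ) * a ^ 5 * (23 - 10*a) ^ 2 * (18*s - a) ^ 2 * (27*a - 90*s) ^ 2 +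
      (1021978270541472228:ℝ) * a ^ 5 * (23 - 10*a) ^ 2 * (18*s - a) ^ 3 * (27*a - 90*s) +
      (1278209159152848540:ℝ) * a ^ 5 * (23 - 10*a) ^ 2 * (18*s - a) ^ 4 +
      (11336711288704101:ℝ) * a ^ 6 * (23 - 10*a) * (27*a - 90*s) ^ 4 +
      (227681092707791904:ℝ) * a ^ 6 * (23 - 10*a) * (18*s - a) * (27*a - 90*s) ^ 3 +
      (1715901646618540710:ℝ) * a ^ 6 * (23 - 10*a) * (18*s - a) ^ 2 * (27*a - 90*s) ^ 2 +
      (5751282934411227360:ℝ) * a ^ 6 * (23 - 10*a) * (18*s - a) ^ 3 * (27*a - 90*s) +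
      (7233591191361311925:ℝ) * a ^ 6 * (23 - 10*a) * (18*s - a) ^ 4 +
      (26144283623545644:ℝ) * a ^ 7 * (27*a - 90*s) ^ 4 +
      (527710675042539612:ℝ) * a ^ 7 * (18*s - a) * (27*a - 90*s) ^ 3 +
      (3997390109916034980:ℝ) * a ^ 7 * (18*s - a) ^ 2 * (27*a - 90*s) ^ 2 +
      (13467749799140345700:ℝ) * a ^ 7 * (18*s - a) ^ 3 * (27*a - 90*s) +
      (17027738869184838000:ℝ) * a ^ 7 * (18*s - a) ^ 4 := by
    simp only [Pp, Qp, Rp, Ap]; ring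
  have hsum : (0:ℝ) ≤ (910097179585298496:ℝ) * a^4 * (3 * (a * Pp a s * Qp a s) - (10 * Ap a s)) := by
    rw [key]
    repeat' apply add_nonneg
    all_goals repeat' apply mul_nonneg
    all_goals
      first
        | exact pow_nonneg h0 _ | exact pow_nonneg h1 _ | exact pow_nonneg h2 _
        | exact pow_nonneg h3 _ | exact h0 | exact h1 | exact h2 | exact h3 | norm_num
  have hpos : (0:ℝ) < (910097179585298496:ℝ) * a^4 := by positivity
  nlinarith [hsum, hpos]

lemma certL3 (a s : ℝ) (ha : 0 < a) (ha2 : a ≤ 23/10) (hs1 : a ≤ 18*s) (hs2 : 10*s ≤ 3*a) :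
    25 * Pp a s ≤ 14 * Qp a s := by
  have h0 : (0:ℝ) ≤ a := ha.le
  have h1 : (0:ℝ) ≤ 23 - 10*a := by linarith
  have h2 : (0:ℝ) ≤ 18*s - a := by linarith
  have h3 : (0:ℝ) ≤ 27*a - 90*s := by linarith
  have key : (953990136:ℝ) * a^2 * (14 * Qp a s - 25 * Pp a s) =
      (158760:ℝ) * (23 - 10*a) ^ 3 * (27*a - 90*s) ^ 2 +
      (1587600:ℝ) * (23 - 10*a) ^ 3 * (18*s - a) * (27*a - 90*s) +
      (3969000:ℝ) * (23 - 10*a) ^ 3 * (18*s - a) ^ 2 +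
      (4282974:ℝ) * a * (23 - 10*a) ^ 2 * (27*a - 90*s) ^ 2 +
      (46454724:ℝ) * a * (23 - 10*a) ^ 2 * (18*s - a) * (27*a - 90*s) +
      (125199270:ℝ) * a * (23 - 10*a) ^ 2 * (18*s - a) ^ 2 +
      (29540501:ℝ) * a ^ 2 * (23 - 10*a) * (27*a - 90*s) ^ 2 +
      (386769888:ℝ) * a ^ 2 * (23 - 10*a) * (18*s - a) * (27*a - 90*s) +
      (1198921419:ℝ) * a ^ 2 * (23 - 10*a) * (18*s - a) ^ 2 +
      (5719058:ℝ) * a ^ 3 * (27*a - 90*s) ^ 2 +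
      (642067884:ℝ) * a ^ 3 * (18*s - a) * (27*a - 90*s) +
      (3103208010:ℝ) * a ^ 3 * (18*s - a) ^ 2 := by
    simp only [Pp, Qp]; ring
  have hsum : (0:ℝ) ≤ (953990136:ℝ) * a^2 * (14 * Qp a s - 25 * Pp a s) := by
    rw [key]
    repeat' apply add_nonneg
    all_goals
      repeat' apply mul_nonneg
    all_goals
      first
        | exact pow_nonneg h0 _ | exact pow_nonneg h1 _ | exact pow_nonneg h2 _
        | exact pow_nonneg h3 _ | exact h0 | exact h1 | exact h2 | exact h3 | norm_num
  have hpos : (0:ℝ) < (953990136:ℝ) * a^2 := by positivity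
  nlinarith [hsum, hpos]

lemma Ppos (a s : ℝ) (ha : 0 ≤ a) (hs : 0 ≤ s) : 196 ≤ Pp a s := by
  simp only [Pp]; nlinarith [mul_nonneg ha hs, pow_nonneg ha 3, sq_nonneg a, mul_nonneg (mul_nonneg ha ha) hs]

lemma Qpos (a s : ℝ) (ha : 0 ≤ a) (hs : 0 ≤ s) : 420 ≤ Qp a s := by
  simp only [Qp]
  nlinarith [mul_nonneg ha hs, pow_nonneg ha 3, mul_nonneg (mul_nonneg ha ha) hs,
    mul_nonneg ha ha, mul_nonneg hs hs]

lemma Qupper (a s : ℝ) (ha : 0 ≤ a) (ha2 : a ≤ 23/10) (hs : 0 ≤ s) (hs2 : 10*s ≤ 3*a) :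
    Qp a s ≤ 960 := by
  simp only [Qp]
  nlinarith [mul_nonneg ha hs, mul_nonneg ha ha, mul_nonneg hs hs,
    mul_nonneg (mul_nonneg ha ha) hs, pow_nonneg ha 3,
    mul_nonneg (sub_nonneg.2 ha2) ha, mul_nonneg (sub_nonneg.2 ha2) hs,
    mul_nonneg (mul_nonneg (sub_nonneg.2 ha2) ha) ha,
    mul_nonneg (mul_nonneg (sub_nonneg.2 ha2) ha) hs,
    mul_nonneg (mul_nonneg (sub_nonneg.2 ha2) hs) hs,
    mul_nonneg (sub_nonneg.2 ha2) (sub_nonneg.2 ha2)]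

lemma Pmono (a s b u : ℝ) (ha : 0 < a) (hs1 : a ≤ 18*s) (hb0 : 0 ≤ b)
    (hb : 25*b ≤ 14*a) (hu0 : 0 ≤ u) (hu : 10*u ≤ 3*b) : Pp b u ≤ Pp a s := by
  have hab : b ≤ a := by linarith
  have h3 : b^3 ≤ a^3 := pow_le_pow_left₀ hb0 hab 3
  have h2 : (25*b)^2 ≤ (14*a)^2 := pow_le_pow_left₀ (by linarith) hb 2
  simp only [Pp]
  nlinarith [mul_le_mul_of_nonneg_left hu (by linarith : (0:ℝ) ≤ 3*b),
    mul_le_mul_of_nonneg_left hs1 (by linarith : (0:ℝ) ≤ a), h3, h2,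
    mul_nonneg hb0 hu0, ha.le]

lemma Qmono (a s b u : ℝ) (ha : 0 < a) (hs0 : 0 ≤ s) (hb0 : 0 ≤ b)
    (hb : 25*b ≤ 14*a) (hu0 : 0 ≤ u) (hu : 10*u ≤ 3*b) : Qp b u ≤ Qp a s := by
  have hab : b ≤ a := by linarith
  have h3 : (25*b)^3 ≤ (14*a)^3 := pow_le_pow_left₀ (by linarith) hb 3
  have h2 : (25*b)^2 ≤ (14*a)^2 := pow_le_pow_left₀ (by linarith) hb 2
  simp only [Qp]
  nlinarith [mul_le_mul_of_nonneg_left hu (by linarith : (0:ℝ) ≤ 3*b),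
    mul_le_mul_of_nonneg_left hu (mul_nonneg hb0 hb0),
    mul_le_mul_of_nonneg_left hu (by linarith : (0:ℝ) ≤ 2*u),
    h3, h2, mul_nonneg hb0 hu0, ha.le, mul_nonneg (mul_nonneg ha.le ha.le) hs0,
    mul_nonneg ha.le hs0, mul_nonneg hs0 hs0, mul_nonneg hu0 hu0,
    mul_nonneg (mul_nonneg hb0 hb0) hu0]

theorem stmt_17 (f g h : ℕ → ℝ)
    (hf0 : f 0 = 4) (hg0 : g 0 = 1) (hh0 : h 0 = 1)
    (hf : ∀ n : ℕ, f (n + 1) = f n ^ 6 + 15 * f n ^ 5 * g n + 3 * f n ^ 5 * h n +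
      78 * f n ^ 4 * g n ^ 2 + 18 * f n ^ 4 * g n * h n + 142 * f n ^ 3 * g n ^ 3)
    (hg : ∀ n : ℕ, g (n + 1) = f n ^ 5 * g n + f n ^ 5 * h n + 16 * f n ^ 4 * g n ^ 2 +
      18 * f n ^ 4 * g n * h n + 89 * f n ^ 3 * g n ^ 3 + 2 * f n ^ 4 * h n ^ 2 +
      77 * f n ^ 3 * g n ^ 2 * h n + 171 * f n ^ 2 * g n ^ 4)
    (hh : ∀ n : ℕ, h (n + 1) = 3 * f n ^ 4 * g n ^ 2 + 6 * f n ^ 4 * g n * h n +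
      51 * f n ^ 3 * g n ^ 3 + 3 * f n ^ 4 * h n ^ 2 + 129 * f n ^ 3 * g n ^ 2 * h n +
      279 * f n ^ 2 * g n ^ 4 + 60 * f n ^ 3 * g n * h n ^ 2 +
      564 * f n ^ 2 * g n ^ 3 * h n + 468 * f n * g n ^ 5)
    (hfpos : ∀ n : ℕ, 0 < f n) (hgpos : ∀ n : ℕ, 0 < g n) (hhpos : ∀ n : ℕ, 0 < h n)
    (α β : ℕ → ℝ)
    (hα : ∀ n : ℕ, α n = f n / g n) (hβ : ∀ n : ℕ, β n = g n / h n) :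
    ∃ z : ℝ, Tendsto (fun n : ℕ => Real.log (f n) / ((7 * (6 : ℝ) ^ n + 8) / 5)) atTop (nhds z) ∧
      ∀ m : ℕ, 1 ≤ m →
        (2 * Real.log (f m) + 3 * Real.log (g m)) / (7 * 6 ^ m) +
          (2 * Real.log 196 + 3 * Real.log 420) / (35 * 6 ^ m) ≤ z ∧
        z ≤ (2 * Real.log (f m) + 3 * Real.log (g m)) / (7 * 6 ^ m) +
          (2 * Real.log (142 + 18 * (α m / β m) + 78 * α m + 3 * (α m ^ 2 / β m) +
              15 * α m ^ 2 + α m ^ 3) +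
           3 * Real.log (171 + 77 * (α m / β m) + 2 * (α m ^ 2 / β m ^ 2) + 89 * α m +
              18 * (α m ^ 2 / β m) + 16 * α m ^ 2 + α m ^ 3 / β m + α m ^ 3)) /
          (35 * 6 ^ m) := by
  have hfne : ∀ n, f n ≠ 0 := fun n => (hfpos n).ne'
  have hgne : ∀ n, g n ≠ 0 := fun n => (hgpos n).ne'
  have hhne : ∀ n, h n ≠ 0 := fun n => (hhpos n).ne'
  set a : ℕ → ℝ := fun n => f n / g n with ha_def
  set s : ℕ → ℝ := fun n => f n * h n / (g n)^2 - 3 with hs_def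
  have e2 : ∀ n, a n * g n = f n := by
    intro n; simp only [ha_def]; exact div_mul_cancel₀ _ (hgne _)
  have e4 : ∀ n, (s n + 3) * g n^2 = f n * h n := by
    intro n
    have hsp : s n + 3 = f n * h n / g n^2 := by simp only [hs_def]; ring
    rw [hsp]; exact div_mul_cancel₀ _ (pow_ne_zero 2 (hgne _))
  have K1 : ∀ n, f (n+1) = f n^3 * g n^3 * Pp (a n) (s n) := by
    intro n; rw [hf n]; simp only [Pp]
    linear_combination (-(87*f n^3*g n^2 + 15*f n^4*g n + f n^5 + 3*(s n)*f n^3*g n^2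
      + 15*(a n)*f n^3*g n^2 + (a n)*f n^4*g n + (a n)^2*f n^3*g n^2)) * e2 n
      + (-(18*f n^3*g n + 3*f n^4)) * e4 n
  have K2 : ∀ n, g (n+1) = f n^2 * g n^4 * Qp (a n) (s n) := by
    intro n; rw [hg n]; simp only [Qp]
    linear_combination (-(143*f n^2*g n^3 + 19*f n^3*g n^2 + f n^4*g n + 18*(s n)*f n^2*g n^3
      + (s n)*f n^3*g n^2 + 19*(a n)*f n^2*g n^3 + (a n)*f n^3*g n^2 + (a n)*(s n)*f n^2*g n^3
      + (a n)^2*f n^2*g n^3)) * e2 n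
      + (-(83*f n^2*g n^2 + 2*f n^3*h n + 18*f n^3*g n + f n^4 + 2*(s n)*f n^2*g n^2)) * e4 n
  have K3 : ∀ n, h (n+1) = f n * g n^5 * Rp (a n) (s n) := by
    intro n; rw [hh n]; simp only [Rp]
    linear_combination (-(693*f n*g n^4 + 69*f n^2*g n^3 + 3*f n^3*g n^2 + 147*(s n)*f n*g n^4
      + 6*(s n)*f n^2*g n^3 + 3*(s n)^2*f n*g n^4 + 69*(a n)*f n*g n^4 + 3*(a n)*f n^2*g n^3
      + 6*(a n)*(s n)*f n*g n^4 + 3*(a n)^2*f n*g n^4)) * e2 n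
      + (-(744*f n*g n^3 + 60*f n^2*g n*h n + 138*f n^2*g n^2 + 3*f n^3*h n + 6*f n^3*g n
      + 60*(s n)*f n*g n^3 + 3*(s n)*f n^2*g n^2)) * e4 n
  have haQ : ∀ n, a (n+1) * Qp (a n) (s n) = a n * Pp (a n) (s n) := by
    intro n
    have e3 : a (n+1) * (f n^2 * g n^4 * Qp (a n) (s n)) = f n^3 * g n^3 * Pp (a n) (s n) := by
      rw [← K2 n, ← K1 n]; exact e2 (n+1)
    have hcan : f n^2 * g n^4 ≠ 0 :=
      mul_ne_zero (pow_ne_zero _ (hfne n)) (pow_ne_zero _ (hgne n))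
    apply mul_right_cancel₀ hcan
    linear_combination e3 - Pp (a n) (s n) * f n^2 * g n^3 * e2 n
  have hsQ : ∀ n, (s (n+1) + 3) * Qp (a n) (s n)^2 = Pp (a n) (s n) * Rp (a n) (s n) := by
    intro n
    have e3 : (s (n+1) + 3) * (f n^2 * g n^4 * Qp (a n) (s n))^2
        = (f n^3 * g n^3 * Pp (a n) (s n)) * (f n * g n^5 * Rp (a n) (s n)) := by
      rw [← K2 n, ← K1 n, ← K3 n]; exact e4 (n+1)
    have hcan : f n^4 * g n^8 ≠ 0 :=
      mul_ne_zero (pow_ne_zero _ (hfne n)) (pow_ne_zero _ (hgne n))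
    apply mul_right_cancel₀ hcan
    linear_combination e3
  -- base values
  have hf1 : f 1 = 56192 := by rw [hf 0, hf0, hg0, hh0]; norm_num
  have hg1 : g 1 = 24624 := by rw [hg 0, hf0, hg0, hh0]; norm_num
  have hh1 : h 1 = 33792 := by rw [hh 0, hf0, hg0, hh0]; norm_num
  have ha1 : a 1 = 56192/24624 := by simp only [ha_def]; rw [hf1, hg1]
  have hs1 : s 1 = 56192*33792/24624^2 - 3 := by simp only [hs_def]; rw [hf1, hg1, hh1]
  -- invariant region
  have Inv : ∀ n, 1 ≤ n → 0 < a n ∧ a n ≤ 23/10 ∧ a n ≤ 18 * s n ∧ 10 * s n ≤ 3 * a n := by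
    intro n hn
    induction n with
    | zero => omega
    | succ k ih =>
      rcases Nat.lt_or_ge 1 (k+1) with h1 | h1
      · have hk : 1 ≤ k := by omega
        obtain ⟨i1, i2, i3, i4⟩ := ih hk
        have hs0 : 0 ≤ s k := by linarith
        have hP := Ppos (a k) (s k) i1.le hs0
        have hQ := Qpos (a k) (s k) i1.le hs0
        have hQpos : 0 < Qp (a k) (s k) := by linarith
        have hPpos : 0 < Pp (a k) (s k) := by linarith
        have hQ2 : (0:ℝ) < Qp (a k) (s k)^2 := by positivity
        have hA : a (k+1) = a k * Pp (a k) (s k) / Qp (a k) (s k) := by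
          rw [eq_div_iff hQpos.ne']; exact haQ k
        have hS : s (k+1) = Ap (a k) (s k) / Qp (a k) (s k)^2 := by
          rw [eq_div_iff hQ2.ne']; simp only [Ap]; linear_combination hsQ k
        have c1 := certL1 (a k) (s k) i1 i2 i3 i4
        have c2 := certL2 (a k) (s k) i1 i2 i3 i4
        have c3 := certL3 (a k) (s k) i1 i2 i3 i4
        have hPQ : Pp (a k) (s k) ≤ Qp (a k) (s k) := by linarith
        have hAp : 0 < a (k+1) := by
          rw [hA]; exact div_pos (mul_pos i1 hPpos) hQpos
        refine ⟨hAp, ?_, ?_, ?_⟩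
        · rw [hA, div_le_iff₀ hQpos]
          nlinarith [mul_le_mul_of_nonneg_right i2 hPpos.le]
        · rw [hA, hS,
            show (18:ℝ) * (Ap (a k) (s k) / Qp (a k) (s k)^2)
              = 18 * Ap (a k) (s k) / Qp (a k) (s k)^2 by ring,
            div_le_div_iff₀ hQpos hQ2]
          nlinarith [mul_le_mul_of_nonneg_right c1 hQpos.le]
        · rw [hA, hS,
            show (10:ℝ) * (Ap (a k) (s k) / Qp (a k) (s k)^2)
              = 10 * Ap (a k) (s k) / Qp (a k) (s k)^2 by ring,
            show (3:ℝ) * (a k * Pp (a k) (s k) / Qp (a k) (s k))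
              = 3 * (a k * Pp (a k) (s k)) / Qp (a k) (s k) by ring,
            div_le_div_iff₀ hQ2 hQpos]
          nlinarith [mul_le_mul_of_nonneg_right c2 hQpos.le]
      · have hk1 : k = 0 := by omega
        subst hk1
        simp only [zero_add]
        rw [ha1, hs1]
        norm_num
  -- basic positivity facts along the orbit (n ≥ 1)
  have hPQfacts : ∀ n, 1 ≤ n → 196 ≤ Pp (a n) (s n) ∧ 420 ≤ Qp (a n) (s n) := by
    intro n hn
    obtain ⟨i1, i2, i3, i4⟩ := Inv n hn
    have hs0 : 0 ≤ s n := by linarith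
    exact ⟨Ppos (a n) (s n) i1.le hs0, Qpos (a n) (s n) i1.le hs0⟩
  -- P, Q decrease along the orbit
  have hdec : ∀ n, 1 ≤ n → Pp (a (n+1)) (s (n+1)) ≤ Pp (a n) (s n) ∧
      Qp (a (n+1)) (s (n+1)) ≤ Qp (a n) (s n) := by
    intro n hn
    obtain ⟨i1, i2, i3, i4⟩ := Inv n hn
    obtain ⟨j1, j2, j3, j4⟩ := Inv (n+1) (by omega)
    have hs0 : 0 ≤ s n := by linarith
    have hs0' : 0 ≤ s (n+1) := by linarith
    have hQpos : 0 < Qp (a n) (s n) := by linarith [(hPQfacts n hn).2]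
    have c3 := certL3 (a n) (s n) i1 i2 i3 i4
    have h25 : 25 * a (n+1) ≤ 14 * a n := by
      have hmul : 25 * a (n+1) * Qp (a n) (s n) ≤ 14 * a n * Qp (a n) (s n) := by
        nlinarith [haQ n, mul_le_mul_of_nonneg_left c3 i1.le]
      exact le_of_mul_le_mul_right hmul hQpos
    exact ⟨Pmono (a n) (s n) (a (n+1)) (s (n+1)) i1 i3 j1.le h25 hs0' j4,
      Qmono (a n) (s n) (a (n+1)) (s (n+1)) i1 hs0 j1.le h25 hs0' j4⟩
  have hmono : ∀ m, 1 ≤ m → ∀ n, m ≤ n → Pp (a n) (s n) ≤ Pp (a m) (s m) ∧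
      Qp (a n) (s n) ≤ Qp (a m) (s m) := by
    intro m hm n hn
    induction n, hn using Nat.le_induction with
    | base => exact ⟨le_refl _, le_refl _⟩
    | succ n hmn ih =>
      obtain ⟨d1, d2⟩ := hdec n (le_trans hm hmn)
      exact ⟨le_trans d1 ih.1, le_trans d2 ih.2⟩
  -- lower bound on a n : a n ≥ (1/5)^n for n ≥ 1
  have halow : ∀ n, 1 ≤ n → ((1:ℝ)/5)^n ≤ a n := by
    intro n hn
    induction n with
    | zero => omega
    | succ k ih =>
      rcases Nat.lt_or_ge 1 (k+1) with h1 | h1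
      · have hk : 1 ≤ k := by omega
        have ihk := ih hk
        obtain ⟨i1, i2, i3, i4⟩ := Inv k hk
        have hs0 : 0 ≤ s k := by linarith
        have hP := Ppos (a k) (s k) i1.le hs0
        have hQ := Qpos (a k) (s k) i1.le hs0
        have hQup := Qupper (a k) (s k) i1.le i2 hs0 i4
        have hstep : a k ≤ 5 * a (k+1) := by
          have hQpos : 0 < Qp (a k) (s k) := by linarith
          have hmul : a k * Qp (a k) (s k) ≤ 5 * a (k+1) * Qp (a k) (s k) := by
            nlinarith [haQ k, mul_le_mul_of_nonneg_left hQup i1.le,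
              mul_le_mul_of_nonneg_left hP i1.le]
          exact le_of_mul_le_mul_right hmul hQpos
        calc ((1:ℝ)/5)^(k+1) = ((1:ℝ)/5)^k * (1/5) := by rw [pow_succ]
          _ ≤ a k * (1/5) := by
              apply mul_le_mul_of_nonneg_right ihk; norm_num
          _ ≤ a (k+1) := by linarith
      · have hk1 : k = 0 := by omega
        subst hk1
        simp only [zero_add, pow_one]
        rw [ha1]; norm_num
  -- logarithmic sequences
  set t : ℕ → ℝ := fun n => 2 * Real.log (f n) + 3 * Real.log (g n) with ht_def
  set c : ℕ → ℝ := fun n => 2 * Real.log (Pp (a n) (s n)) + 3 * Real.log (Qp (a n) (s n))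
    with hc_def
  set u : ℕ → ℝ := fun n => t n / (7 * 6^n) with hu_def
  have hrec : ∀ n, 1 ≤ n → u (n+1) = u n + c n / (7 * 6^(n+1)) := by
    intro n hn
    obtain ⟨hP196, hQ420⟩ := hPQfacts n hn
    have hPne : Pp (a n) (s n) ≠ 0 := by intro hx; rw [hx] at hP196; linarith
    have hQne : Qp (a n) (s n) ≠ 0 := by intro hx; rw [hx] at hQ420; linarith
    have hlf : Real.log (f (n+1)) = 3 * Real.log (f n) + 3 * Real.log (g n)
        + Real.log (Pp (a n) (s n)) := by
      rw [K1 n, Real.log_mul (mul_ne_zero (pow_ne_zero _ (hfne n)) (pow_ne_zero _ (hgne n))) hPne,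
        Real.log_mul (pow_ne_zero _ (hfne n)) (pow_ne_zero _ (hgne n)),
        Real.log_pow, Real.log_pow]
      push_cast; ring
    have hlg : Real.log (g (n+1)) = 2 * Real.log (f n) + 4 * Real.log (g n)
        + Real.log (Qp (a n) (s n)) := by
      rw [K2 n, Real.log_mul (mul_ne_zero (pow_ne_zero _ (hfne n)) (pow_ne_zero _ (hgne n))) hQne,
        Real.log_mul (pow_ne_zero _ (hfne n)) (pow_ne_zero _ (hgne n)),
        Real.log_pow, Real.log_pow]
      push_cast; ring
    simp only [hu_def, ht_def, hc_def]
    rw [hlf, hlg]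
    have h6 : (0:ℝ) < (6:ℝ)^n := by positivity
    field_simp
    ring
  have hform : ∀ m, 1 ≤ m → ∀ N, u (m+N) = u m +
      ∑ k ∈ Finset.range N, c (m+k) * (7 * (6:ℝ)^(m+k+1))⁻¹ := by
    intro m hm N
    induction N with
    | zero => simp
    | succ N ih =>
      have : m + (N+1) = (m+N) + 1 := by omega
      rw [this, hrec (m+N) (by omega), ih, Finset.sum_range_succ]
      rw [div_eq_mul_inv]
      ring
  have hL0 : (0:ℝ) ≤ 2 * Real.log 196 + 3 * Real.log 420 := by
    have l1 : (0:ℝ) ≤ Real.log 196 := Real.log_nonneg (by norm_num)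
    have l2 : (0:ℝ) ≤ Real.log 420 := Real.log_nonneg (by norm_num)
    linarith
  have hcL : ∀ n, 1 ≤ n → 2 * Real.log 196 + 3 * Real.log 420 ≤ c n := by
    intro n hn
    obtain ⟨hP196, hQ420⟩ := hPQfacts n hn
    have l1 : Real.log 196 ≤ Real.log (Pp (a n) (s n)) := Real.log_le_log (by norm_num) hP196
    have l2 : Real.log 420 ≤ Real.log (Qp (a n) (s n)) := Real.log_le_log (by norm_num) hQ420
    simp only [hc_def]; linarith
  have hcle : ∀ m, 1 ≤ m → ∀ n, m ≤ n → c n ≤ c m := by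
    intro m hm n hn
    obtain ⟨hPm, hQm⟩ := hmono m hm n hn
    obtain ⟨hPn196, hQn420⟩ := hPQfacts n (le_trans hm hn)
    have l1 : Real.log (Pp (a n) (s n)) ≤ Real.log (Pp (a m) (s m)) :=
      Real.log_le_log (by linarith) hPm
    have l2 : Real.log (Qp (a n) (s n)) ≤ Real.log (Qp (a m) (s m)) :=
      Real.log_le_log (by linarith) hQm
    simp only [hc_def]; linarith
  have hcnonneg : ∀ n, 1 ≤ n → 0 ≤ c n := fun n hn => le_trans hL0 (hcL n hn)
  -- geometric sums
  have hgeo : ∀ m : ℕ, HasSum (fun k : ℕ => (7 * (6:ℝ)^(m+k+1))⁻¹) ((35 * (6:ℝ)^m)⁻¹) := by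
    intro m
    have hbase := hasSum_geometric_of_lt_one (r := (6:ℝ)⁻¹) (by norm_num) (by norm_num)
    have h2 := hbase.mul_left ((7 * (6:ℝ)^(m+1))⁻¹)
    have heq : ∀ k : ℕ, (7 * (6:ℝ)^(m+k+1))⁻¹ = (7 * (6:ℝ)^(m+1))⁻¹ * ((6:ℝ)⁻¹)^k := by
      intro k
      rw [show m+k+1 = (m+1)+k from by omega, pow_add]
      rw [mul_inv, inv_pow, mul_inv]
      ring
    have hval : (7 * (6:ℝ)^(m+1))⁻¹ * (1 - (6:ℝ)⁻¹)⁻¹ = (35 * (6:ℝ)^m)⁻¹ := by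
      rw [pow_succ]
      rw [show (1 - (6:ℝ)⁻¹) = 5/6 by norm_num]
      rw [mul_comm ((6:ℝ)^m) 6, ← mul_assoc, mul_inv, mul_inv]
      norm_num
      ring
    rw [← hval]
    exact h2.congr_fun heq
  -- the limit z
  have hd0 : ∀ k : ℕ, 0 ≤ c (1+k) * (7 * (6:ℝ)^(1+k+1))⁻¹ := by
    intro k
    apply mul_nonneg (hcnonneg (1+k) (by omega))
    positivity
  have hdle : ∀ k : ℕ, c (1+k) * (7 * (6:ℝ)^(1+k+1))⁻¹ ≤ c 1 * (7 * (6:ℝ)^(1+k+1))⁻¹ := by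
    intro k
    apply mul_le_mul_of_nonneg_right (hcle 1 le_rfl (1+k) (by omega))
    positivity
  have hdsum : Summable (fun k : ℕ => c (1+k) * (7 * (6:ℝ)^(1+k+1))⁻¹) :=
    ((hgeo 1).summable.mul_left (c 1)).of_nonneg_of_le hd0 hdle
  set z : ℝ := u 1 + ∑' k : ℕ, c (1+k) * (7 * (6:ℝ)^(1+k+1))⁻¹ with hz_def
  have hz1 : Tendsto (fun N => u (1+N)) atTop (nhds z) := by
    have hps := hdsum.hasSum.tendsto_sum_nat
    have h2 := hps.const_add (u 1)
    exact h2.congr (fun N => (hform 1 le_rfl N).symm)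
  have hu_tendsto : Tendsto u atTop (nhds z) := by
    have h' : Tendsto (fun N => u (N+1)) atTop (nhds z) := by
      have : (fun N => u (N+1)) = (fun N => u (1+N)) := by
        funext N; rw [add_comm]
      rw [this]; exact hz1
    exact (tendsto_add_atTop_iff_nat 1).mp h'
  -- bounds for every m ≥ 1
  have hbounds : ∀ m, 1 ≤ m →
      u m + (2 * Real.log 196 + 3 * Real.log 420) * (35 * (6:ℝ)^m)⁻¹ ≤ z ∧
      z ≤ u m + c m * (35 * (6:ℝ)^m)⁻¹ := by
    intro m hm
    have hzm : Tendsto (fun N => u (m+N)) atTop (nhds z) := by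
      have h2 := hu_tendsto.comp (tendsto_add_atTop_nat m)
      have : (fun N => u (m+N)) = u ∘ (fun N => N + m) := by
        funext N; simp [add_comm]
      rw [this]; exact h2
    constructor
    · have htl : Tendsto (fun N => u m + (2 * Real.log 196 + 3 * Real.log 420) *
          ∑ k ∈ Finset.range N, (7 * (6:ℝ)^(m+k+1))⁻¹) atTop
          (nhds (u m + (2 * Real.log 196 + 3 * Real.log 420) * (35 * (6:ℝ)^m)⁻¹)) :=
        (((hgeo m).tendsto_sum_nat).const_mul _).const_add (u m)
      apply le_of_tendsto_of_tendsto' htl hzm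
      intro N
      rw [hform m hm N]
      apply add_le_add_right
      rw [Finset.mul_sum]
      apply Finset.sum_le_sum
      intro k _
      apply mul_le_mul_of_nonneg_right (hcL (m+k) (by omega))
      positivity
    · have htu : Tendsto (fun N => u m + c m *
          ∑ k ∈ Finset.range N, (7 * (6:ℝ)^(m+k+1))⁻¹) atTop
          (nhds (u m + c m * (35 * (6:ℝ)^m)⁻¹)) :=
        (((hgeo m).tendsto_sum_nat).const_mul _).const_add (u m)
      apply le_of_tendsto_of_tendsto' hzm htu
      intro N
      rw [hform m hm N]
      apply add_le_add_right
      rw [Finset.mul_sum]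
      apply Finset.sum_le_sum
      intro k _
      apply mul_le_mul_of_nonneg_right (hcle m hm (m+k) (by omega))
      positivity
  -- convergence of the stated sequence to z
  have hDtop : Tendsto (fun n : ℕ => 7 * (6:ℝ)^n + 8) atTop atTop := by
    apply tendsto_atTop_add_const_right
    exact (tendsto_pow_atTop_atTop_of_one_lt (by norm_num : (1:ℝ) < 6)).const_mul_atTop
      (by norm_num)
  have e1' : Tendsto (fun n : ℕ => 8 / (7 * (6:ℝ)^n + 8)) atTop (nhds 0) :=
    tendsto_const_nhds.div_atTop hDtop
  have hnpow : Tendsto (fun n : ℕ => (n:ℝ) / (7 * (6:ℝ)^n)) atTop (nhds 0) := by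
    apply squeeze_zero (fun n => by positivity)
      (g := fun n : ℕ => ((1:ℝ)/3)^n)
    · intro n
      have h1 : (n:ℝ) ≤ 2^n := by exact_mod_cast (Nat.lt_two_pow_self (n := n)).le
      have h2 : (0:ℝ) < 6^n := by positivity
      rw [div_le_iff₀ (by positivity)]
      calc (n:ℝ) ≤ 2^n := h1
        _ = ((1:ℝ)/3)^n * 6^n := by
            rw [← mul_pow]; norm_num
        _ ≤ ((1:ℝ)/3)^n * (7 * 6^n) := by
            apply mul_le_mul_of_nonneg_left _ (by positivity)
            linarith
    · exact tendsto_pow_atTop_nhds_zero_of_lt_one (by norm_num) (by norm_num)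
  have elog : Tendsto (fun n : ℕ => Real.log (a n) / (7 * (6:ℝ)^n + 8)) atTop (nhds 0) := by
    apply squeeze_zero_norm' (a := fun n : ℕ => (Real.log 4 + n * Real.log 5) / (7 * (6:ℝ)^n))
    · filter_upwards [eventually_ge_atTop 1] with n hn
      obtain ⟨i1, i2, i3, i4⟩ := Inv n hn
      have hlow := halow n hn
      have hub : Real.log (a n) ≤ Real.log 4 := by
        apply Real.log_le_log i1; linarith
      have hlb : -(↑n * Real.log 5) ≤ Real.log (a n) := by
        have l1 : Real.log (((1:ℝ)/5)^n) ≤ Real.log (a n) :=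
          Real.log_le_log (by positivity) hlow
        rw [Real.log_pow] at l1
        have : Real.log ((1:ℝ)/5) = -Real.log 5 := by
          rw [one_div, Real.log_inv]
        rw [this] at l1
        linarith [l1]
      have hD : (0:ℝ) < 7 * (6:ℝ)^n + 8 := by positivity
      have habs : |Real.log (a n)| ≤ Real.log 4 + n * Real.log 5 := by
        rw [abs_le]
        constructor
        · have h5 : (0:ℝ) ≤ Real.log 4 := Real.log_nonneg (by norm_num)
          linarith
        · have h5 : (0:ℝ) ≤ (n:ℝ) * Real.log 5 := by
            apply mul_nonneg (Nat.cast_nonneg n) (Real.log_nonneg (by norm_num))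
          linarith
      rw [Real.norm_eq_abs, abs_div, abs_of_pos hD]
      have hnum : (0:ℝ) ≤ Real.log 4 + n * Real.log 5 := by
        have h5 : (0:ℝ) ≤ Real.log 4 := Real.log_nonneg (by norm_num)
        have h6 : (0:ℝ) ≤ (n:ℝ) * Real.log 5 :=
          mul_nonneg (Nat.cast_nonneg n) (Real.log_nonneg (by norm_num))
        linarith
      have step1 : |Real.log (a n)| / (7 * (6:ℝ)^n + 8) ≤
          (Real.log 4 + n * Real.log 5) / (7 * (6:ℝ)^n + 8) :=
        (div_le_div_iff_of_pos_right hD).mpr habs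
      have step2 : (Real.log 4 + n * Real.log 5) / (7 * (6:ℝ)^n + 8) ≤
          (Real.log 4 + n * Real.log 5) / (7 * (6:ℝ)^n) := by
        gcongr <;> first | linarith | positivity
      linarith
    · have t1 : Tendsto (fun n : ℕ => Real.log 4 / (7 * (6:ℝ)^n)) atTop (nhds 0) :=
        tendsto_const_nhds.div_atTop
          ((tendsto_pow_atTop_atTop_of_one_lt (by norm_num : (1:ℝ) < 6)).const_mul_atTop
            (by norm_num))
      have t2 : Tendsto (fun n : ℕ => Real.log 5 * ((n:ℝ) / (7 * (6:ℝ)^n))) atTop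
          (nhds (Real.log 5 * 0)) := hnpow.const_mul _
      have t3 := t1.add t2
      rw [show (0:ℝ) + Real.log 5 * 0 = 0 by ring] at t3
      exact Tendsto.congr (fun n => by ring) t3
  -- pointwise identity for the stated sequence
  have hpt : ∀ n : ℕ, Real.log (f n) / ((7 * (6:ℝ)^n + 8) / 5)
      = u n * (1 - 8 / (7 * (6:ℝ)^n + 8)) + 3 * (Real.log (a n) / (7 * (6:ℝ)^n + 8)) := by
    intro n
    have hla : Real.log (a n) = Real.log (f n) - Real.log (g n) := by
      simp only [ha_def]; exact Real.log_div (hfne n) (hgne n)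
    simp only [hu_def, ht_def]
    rw [hla]
    have h6 : ((6:ℝ)^n) ≠ 0 := by positivity
    have hD : (7 * (6:ℝ)^n + 8) ≠ 0 := by positivity
    field_simp
    ring
  have hfinal : Tendsto (fun n : ℕ => Real.log (f n) / ((7 * (6:ℝ)^n + 8) / 5)) atTop
      (nhds z) := by
    have t1 : Tendsto (fun n : ℕ => u n * (1 - 8 / (7 * (6:ℝ)^n + 8))) atTop
        (nhds (z * (1 - 0))) := hu_tendsto.mul (tendsto_const_nhds.sub e1')
    have t2 : Tendsto (fun n : ℕ => 3 * (Real.log (a n) / (7 * (6:ℝ)^n + 8))) atTop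
        (nhds (3 * 0)) := elog.const_mul 3
    have t3 := t1.add t2
    rw [show z * (1 - 0) + 3 * 0 = z by ring] at t3
    exact Tendsto.congr (fun n => (hpt n).symm) t3
  refine ⟨z, hfinal, ?_⟩
  intro m hm
  obtain ⟨hb1, hb2⟩ := hbounds m hm
  have hum : u m = (2 * Real.log (f m) + 3 * Real.log (g m)) / (7 * 6 ^ m) := rfl
  have hPm : (142 + 18 * (α m / β m) + 78 * α m + 3 * (α m ^ 2 / β m) +
      15 * α m ^ 2 + α m ^ 3) = Pp (a m) (s m) := by
    rw [hα m, hβ m]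
    simp only [ha_def, hs_def, Pp]
    field_simp [hgne m, hhne m]
    ring
  have hQm : (171 + 77 * (α m / β m) + 2 * (α m ^ 2 / β m ^ 2) + 89 * α m +
      18 * (α m ^ 2 / β m) + 16 * α m ^ 2 + α m ^ 3 / β m + α m ^ 3) = Qp (a m) (s m) := by
    rw [hα m, hβ m]
    simp only [ha_def, hs_def, Qp]
    field_simp [hgne m, hhne m]
    ring
  constructor
  · have e : (2 * Real.log (f m) + 3 * Real.log (g m)) / (7 * 6 ^ m) +
        (2 * Real.log 196 + 3 * Real.log 420) / (35 * 6 ^ m)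
        = u m + (2 * Real.log 196 + 3 * Real.log 420) * (35 * (6:ℝ)^m)⁻¹ := by
      rw [hum]; ring
    linarith [hb1, e.le, e.ge]
  · have e : (2 * Real.log (f m) + 3 * Real.log (g m)) / (7 * 6 ^ m) +
        (2 * Real.log (142 + 18 * (α m / β m) + 78 * α m + 3 * (α m ^ 2 / β m) +
            15 * α m ^ 2 + α m ^ 3) +
         3 * Real.log (171 + 77 * (α m / β m) + 2 * (α m ^ 2 / β m ^ 2) + 89 * α m +
            18 * (α m ^ 2 / β m) + 16 * α m ^ 2 + α m ^ 3 / β m + α m ^ 3)) / (35 * 6 ^ m)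
        = u m + c m * (35 * (6:ℝ)^m)⁻¹ := by
      rw [hPm, hQm, hum]
      simp only [hc_def]
      ring
    linarith [hb2, e.le, e.ge]
end
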